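/- arXiv:1611.03129 — 9 statements merged into one kernel-verified Lean document; each statement's English description precedes it below -/
import Mathlib

section
/- Let n ≥ 2k > 0 and let F ⊆ C([n],k) be an intersecting family. Then |F| ≤ C(n−1, k−1). -/
/-- **Erdős–Ko–Rado theorem.** If `n ≥ 2k > 0` and `F` is an intersecting family of
`k`-element subsets of `[n] = {1, ..., n}`, then `|F| ≤ C(n-1, k-1)`. -/
theorem ekr (n k : ℕ) (hk : 0 < k) (hnk : 2 * k ≤ n)
    (F : Finset (Finset ℕ))
    (hF : F ⊆ (Finset.Icc 1 n).powersetCard k)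
    (hint : ∀ A ∈ F, ∀ B ∈ F, (A ∩ B).Nonempty) :
    F.card ≤ (n - 1).choose (k - 1) := by
  have hn : 0 < n := lt_of_lt_of_le (by omega) hnk
  set f : ℕ → Fin n := fun x => ⟨(x - 1) % n, Nat.mod_lt _ hn⟩ with hf
  have hsub : ∀ A ∈ F, A ⊆ Finset.Icc 1 n ∧ A.card = k := by
    intro A hA
    have := hF hA
    rw [Finset.mem_powersetCard] at this
    exact this
  have hfinv : ∀ A ∈ F, (A.image f).image (fun y : Fin n => (y : ℕ) + 1) = A := by
    intro A hA
    rw [Finset.image_image]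
    have : ∀ x ∈ A, ((fun y : Fin n => (y : ℕ) + 1) ∘ f) x = x := by
      intro x hx
      have hx' := (hsub A hA).1 hx
      rw [Finset.mem_Icc] at hx'
      simp only [Function.comp, hf, Nat.mod_eq_of_lt (by omega : x - 1 < n)]
      omega
    calc A.image ((fun y : Fin n => (y : ℕ) + 1) ∘ f) = A.image id :=
          Finset.image_congr this
      _ = A := Finset.image_id
  set 𝒜 : Finset (Finset (Fin n)) := F.image (fun A => A.image f) with h𝒜
  have hcard : 𝒜.card = F.card := by
    apply Finset.card_image_of_injOn
    intro A hA B hB hAB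
    simp only at hAB
    rw [← hfinv A hA, ← hfinv B hB, hAB]
  have hinj : ∀ A ∈ F, (A.image f).card = k := by
    intro A hA
    rw [Finset.card_image_of_injOn, (hsub A hA).2]
    intro x hx y hy hxy
    have := congrArg (fun z : Fin n => (z : ℕ) + 1) hxy
    have hx' := (hsub A hA).1 hx; have hy' := (hsub A hA).1 hy
    rw [Finset.mem_Icc] at hx' hy'
    simp only [hf, Nat.mod_eq_of_lt (by omega : x - 1 < n),
      Nat.mod_eq_of_lt (by omega : y - 1 < n)] at this
    omega
  have hsized : (𝒜 : Set (Finset (Fin n))).Sized k := by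
    intro A hA
    rw [h𝒜, Finset.coe_image] at hA
    obtain ⟨B, hB, rfl⟩ := hA
    exact hinj B hB
  have hintersecting : (𝒜 : Set (Finset (Fin n))).Intersecting := by
    intro A hA B hB
    rw [h𝒜, Finset.coe_image] at hA hB
    obtain ⟨A', hA', rfl⟩ := hA
    obtain ⟨B', hB', rfl⟩ := hB
    obtain ⟨x, hx⟩ := hint A' hA' B' hB'
    rw [Finset.mem_inter] at hx
    simp only
    exact fun hd => (Finset.disjoint_left.mp hd (Finset.mem_image_of_mem f hx.1))
      (Finset.mem_image_of_mem f hx.2)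
  have := Finset.erdos_ko_rado hintersecting hsized (by omega : k ≤ n / 2)
  omega
end

section
/- Let n > 2k > 0 and let F ⊆ C([n],k) be a nontrivially intersecting family. Then |F| ≤ C(n−1, k−1) − C(n−k−1, k−1) + 1. -/
/-!
UV-compressions along pairs `i < j` preserve uniformity, size and cross-intersection and strictly
decrease `∑ A ∈ F, ∑ a ∈ A, 2 ^ a`, so the families may be assumed shifted, except that a
compression can make a nontrivial family trivial. In that case every member meets the pair
`{i, j}`, and splitting by the trace on `{i, j}` reduces the bound to Hilton's inequality
`|X| + |Y| ≤ C(m, ℓ) - C(m - ℓ, ℓ) + 1` for nonempty cross-intersecting `ℓ`-uniform families on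
`m ≥ 2ℓ` points. Hilton's inequality and the theorem are both proved by induction on the ground
set: for shifted families, splitting off the largest point `z` leaves the sets avoiding `z` and
the links of `z`, which are again (cross-)intersecting. At `m = 2ℓ` a family and the complements
of the other are disjoint.
-/

open Finset UV
open scoped FinsetFamily

namespace HiltonMilner

section Families

variable {α : Type*} {V A B : Finset α} {F X Y X' Y' : Finset (Finset α)} {a i j : α}
  {k l : ℕ}

def HasCommonElement (F : Finset (Finset α)) : Prop :=
  ∃ x, ∀ A ∈ F, x ∈ A

theorem nonempty_of_not_hasCommonElement [Nonempty α] (h : ¬ HasCommonElement F) :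
    F.Nonempty := by
  rw [nonempty_iff_ne_empty]
  rintro rfl
  exact h ⟨Classical.arbitrary α, by simp⟩

variable [DecidableEq α]

def CrossIntersecting (X Y : Finset (Finset α)) : Prop :=
  ∀ A ∈ X, ∀ B ∈ Y, (A ∩ B).Nonempty

theorem CrossIntersecting.symm (h : CrossIntersecting X Y) : CrossIntersecting Y X :=
  fun B hB A hA => inter_comm A B ▸ h A hA B hB

theorem CrossIntersecting.mono (h : CrossIntersecting X Y) (hX : X' ⊆ X) (hY : Y' ⊆ Y) :
    CrossIntersecting X' Y' :=
  fun A hA B hB => h A (hX hA) B (hY hB)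

theorem CrossIntersecting.memberSubfamily_nonMemberSubfamily (h : CrossIntersecting X Y)
    (a : α) : CrossIntersecting (X.memberSubfamily a) (Y.nonMemberSubfamily a) := by
  intro A hA B hB
  rw [mem_memberSubfamily] at hA
  rw [mem_nonMemberSubfamily] at hB
  obtain ⟨t, ht⟩ := h _ hA.1 B hB.1
  rw [mem_inter, mem_insert] at ht
  obtain ⟨rfl | htA, htB⟩ := ht
  · exact absurd htB hB.2
  · exact ⟨t, mem_inter.2 ⟨htA, htB⟩⟩

theorem CrossIntersecting.pos_of_subset_powersetCard (h : CrossIntersecting X Y)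
    (hX : X ⊆ V.powersetCard k) (hXne : X.Nonempty) (hYne : Y.Nonempty) : 0 < k := by
  obtain ⟨A, hA⟩ := hXne
  obtain ⟨B, hB⟩ := hYne
  rw [← (mem_powersetCard.1 (hX hA)).2]
  exact card_pos.2 ((h A hA B hB).mono inter_subset_left)

theorem CrossIntersecting.hasCommonElement_of_card_le_one (h : CrossIntersecting F F)
    (hA : A ∈ F) (hA₁ : #A ≤ 1) : HasCommonElement F := by
  have hpos : 0 < #A := card_pos.2 (by simpa using h A hA A hA)
  obtain ⟨x, rfl⟩ := card_eq_one.1 (show #A = 1 by omega)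
  refine ⟨x, fun B hB => ?_⟩
  obtain ⟨t, ht⟩ := h _ hA B hB
  rw [mem_inter, mem_singleton] at ht
  exact ht.1 ▸ ht.2

theorem two_le_of_not_hasCommonElement [Nonempty α] (hF : F ⊆ V.powersetCard k)
    (h : CrossIntersecting F F) (hnt : ¬ HasCommonElement F) : 2 ≤ k := by
  obtain ⟨A, hA⟩ := nonempty_of_not_hasCommonElement hnt
  by_contra! hk
  refine hnt (h.hasCommonElement_of_card_le_one hA ?_)
  rw [(mem_powersetCard.1 (hF hA)).2]
  omega

theorem memberSubfamily_subset_powersetCard (hF : F ⊆ V.powersetCard k) (a : α) :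
    F.memberSubfamily a ⊆ (V.erase a).powersetCard (k - 1) := by
  intro A hA
  rw [mem_memberSubfamily] at hA
  obtain ⟨hAV, hAk⟩ := mem_powersetCard.1 (hF hA.1)
  rw [card_insert_of_notMem hA.2] at hAk
  exact mem_powersetCard.2 ⟨subset_erase.2 ⟨(subset_insert a A).trans hAV, hA.2⟩, by omega⟩

theorem nonMemberSubfamily_subset_powersetCard (hF : F ⊆ V.powersetCard k) (a : α) :
    F.nonMemberSubfamily a ⊆ (V.erase a).powersetCard k := by
  intro A hA
  rw [mem_nonMemberSubfamily] at hA
  obtain ⟨hAV, hAk⟩ := mem_powersetCard.1 (hF hA.1)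
  exact mem_powersetCard.2 ⟨subset_erase.2 ⟨hAV, hA.2⟩, hAk⟩

theorem erase_mem_memberSubfamily (hA : A ∈ F) (ha : a ∈ A) :
    A.erase a ∈ F.memberSubfamily a :=
  mem_memberSubfamily.2 ⟨(insert_erase ha).symm ▸ hA, notMem_erase a A⟩

theorem card_memberSubfamily_of_forall_mem (h : ∀ A ∈ F, a ∈ A) :
    #(F.memberSubfamily a) = #F := by
  rw [← card_memberSubfamily_add_card_nonMemberSubfamily a F, nonMemberSubfamily,
    filter_false_of_mem (by simpa using h), card_empty, add_zero]

theorem card_add_choose_le_of_forall_inter_nonempty (hX : X ⊆ V.powersetCard k) (hB : B ⊆ V)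
    (hXB : ∀ A ∈ X, (A ∩ B).Nonempty) : #X + (#V - #B).choose k ≤ (#V).choose k := by
  have hdisj : Disjoint X ((V \ B).powersetCard k) := by
    refine disjoint_left.2 fun A hA hA' => ?_
    obtain ⟨t, ht⟩ := hXB A hA
    exact (mem_sdiff.1 ((mem_powersetCard.1 hA').1 (mem_inter.1 ht).1)).2 (mem_inter.1 ht).2
  calc #X + (#V - #B).choose k = #(X ∪ (V \ B).powersetCard k) := by
        rw [card_union_of_disjoint hdisj, card_powersetCard, card_sdiff_of_subset hB]
    _ ≤ #(V.powersetCard k) := card_le_card (union_subset hX (powersetCard_mono sdiff_subset))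
    _ = (#V).choose k := card_powersetCard _ _

theorem CrossIntersecting.card_add_card_le_choose (h : CrossIntersecting X Y)
    (hX : X ⊆ V.powersetCard k) (hY : Y ⊆ V.powersetCard l) (hkl : k + l = #V) :
    #X + #Y ≤ (#V).choose k := by
  have hcompl : ∀ B ∈ Y, V \ B ∈ V.powersetCard k := fun B hB => by
    obtain ⟨hBV, hBk⟩ := mem_powersetCard.1 (hY hB)
    refine mem_powersetCard.2 ⟨sdiff_subset, ?_⟩
    have := card_le_card hBV
    rw [card_sdiff_of_subset hBV]
    omega
  have hinj : Set.InjOn (V \ ·) Y := fun B hB C hC hBC => by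
    rw [← Finset.sdiff_sdiff_eq_self (mem_powersetCard.1 (hY hB)).1,
      ← Finset.sdiff_sdiff_eq_self (mem_powersetCard.1 (hY hC)).1]
    exact congrArg (V \ ·) hBC
  have hdisj : Disjoint X (Y.image (V \ ·)) := by
    refine disjoint_right.2 fun T hT hTX => ?_
    obtain ⟨B, hB, rfl⟩ := mem_image.1 hT
    obtain ⟨t, ht⟩ := h _ hTX B hB
    exact (mem_sdiff.1 (mem_inter.1 ht).1).2 (mem_inter.1 ht).2
  calc #X + #Y = #(X ∪ Y.image (V \ ·)) := by
        rw [card_union_of_disjoint hdisj, card_image_of_injOn hinj]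
    _ ≤ #(V.powersetCard k) :=
        card_le_card (union_subset hX fun T hT => by
          obtain ⟨B, hB, rfl⟩ := mem_image.1 hT
          exact hcompl B hB)
    _ = (#V).choose k := card_powersetCard _ _

theorem compress_singleton_of_mem_of_notMem (hij : i ≠ j) (hj : j ∈ A) (hi : i ∉ A) :
    compress {i} {j} A = insert i (A.erase j) := by
  rw [compress_of_disjoint_of_le (disjoint_singleton_left.2 hi) (singleton_subset_iff.2 hj)]
  ext t
  simp only [sup_eq_union, mem_sdiff, mem_union, mem_singleton, mem_insert, mem_erase]
  grind

theorem compress_singleton_eq_self (h : ¬ (j ∈ A ∧ i ∉ A)) : compress {i} {j} A = A := by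
  rw [compress, if_neg]
  rintro ⟨hi, hj⟩
  exact h ⟨singleton_subset_iff.1 hj, disjoint_singleton_left.1 hi⟩

theorem compress_singleton_mem_powersetCard (hij : i ≠ j) (hi : i ∈ V)
    (hA : A ∈ V.powersetCard k) : compress {i} {j} A ∈ V.powersetCard k := by
  refine mem_powersetCard.2 ⟨?_, (card_compress (by simp) A).trans (mem_powersetCard.1 hA).2⟩
  by_cases h : j ∈ A ∧ i ∉ A
  · rw [compress_singleton_of_mem_of_notMem hij h.1 h.2]
    exact insert_subset hi ((erase_subset _ _).trans (mem_powersetCard.1 hA).1)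
  · rw [compress_singleton_eq_self h]
    exact (mem_powersetCard.1 hA).1

theorem compression_subset_powersetCard (hij : i ≠ j) (hi : i ∈ V)
    (hF : F ⊆ V.powersetCard k) : 𝓒 {i} {j} F ⊆ V.powersetCard k := by
  intro A hA
  obtain ⟨hA, -⟩ | ⟨-, B, hB, rfl⟩ := mem_compression.1 hA
  · exact hF hA
  · exact compress_singleton_mem_powersetCard hij hi (hF hB)

theorem mem_compression_singleton (hij : i ≠ j) (hA : A ∈ 𝓒 {i} {j} F) :
    (A ∈ F ∧ compress {i} {j} A ∈ F) ∨
      ∃ B ∈ F, j ∈ B ∧ i ∉ B ∧ A = insert i (B.erase j) := by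
  obtain h | ⟨hAF, B, hB, rfl⟩ := mem_compression.1 hA
  · exact Or.inl h
  · by_cases hc : j ∈ B ∧ i ∉ B
    · exact Or.inr ⟨B, hB, hc.1, hc.2, compress_singleton_of_mem_of_notMem hij hc.1 hc.2⟩
    · rw [compress_singleton_eq_self hc] at hAF
      exact absurd hB hAF

theorem CrossIntersecting.inter_insert_erase_nonempty (h : CrossIntersecting X Y) (hij : i ≠ j)
    (hA : A ∈ X) (hA' : compress {i} {j} A ∈ X) (hB : B ∈ Y) (hjB : j ∈ B) (hiB : i ∉ B) :
    (A ∩ insert i (B.erase j)).Nonempty := by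
  obtain ⟨t, ht⟩ := h A hA B hB
  rw [mem_inter] at ht
  by_cases htj : t = j
  · subst htj
    by_cases hiA : i ∈ A
    · exact ⟨i, mem_inter.2 ⟨hiA, mem_insert_self _ _⟩⟩
    rw [compress_singleton_of_mem_of_notMem hij ht.1 hiA] at hA'
    obtain ⟨s, hs⟩ := h _ hA' B hB
    simp only [mem_inter, mem_insert, mem_erase] at hs
    obtain ⟨rfl | ⟨hst, hsA⟩, hsB⟩ := hs
    · exact absurd hsB hiB
    · exact ⟨s, mem_inter.2 ⟨hsA, mem_insert_of_mem (mem_erase.2 ⟨hst, hsB⟩)⟩⟩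
  · exact ⟨t, mem_inter.2 ⟨ht.1, mem_insert_of_mem (mem_erase.2 ⟨htj, ht.2⟩)⟩⟩

theorem CrossIntersecting.compression (h : CrossIntersecting X Y) (hij : i ≠ j) :
    CrossIntersecting (𝓒 {i} {j} X) (𝓒 {i} {j} Y) := by
  intro A hA B hB
  obtain ⟨hAX, hAX'⟩ | ⟨A, hAX, hjA, hiA, rfl⟩ := mem_compression_singleton hij hA <;>
  obtain ⟨hBY, hBY'⟩ | ⟨B, hBY, hjB, hiB, rfl⟩ := mem_compression_singleton hij hB
  · exact h A hAX B hBY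
  · exact h.inter_insert_erase_nonempty hij hAX hAX' hBY hjB hiB
  · rw [inter_comm]
    exact h.symm.inter_insert_erase_nonempty hij hBY hBY' hAX hjA hiA
  · exact ⟨i, mem_inter.2 ⟨mem_insert_self _ _, mem_insert_self _ _⟩⟩

theorem forall_mem_or_mem_of_hasCommonElement_compression (hij : i ≠ j)
    (hnt : ¬ HasCommonElement F) (h : HasCommonElement (𝓒 {i} {j} F)) :
    ∀ A ∈ F, i ∈ A ∨ j ∈ A := by
  obtain ⟨x, hx⟩ := h
  have hxF : ∀ A ∈ F, x ∈ compress {i} {j} A := fun A hA => hx _ (compress_mem_compression hA)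
  by_cases hxi : x = i
  · subst hxi
    intro A hA
    by_cases hc : j ∈ A ∧ x ∉ A
    · exact Or.inr hc.1
    · exact Or.inl (compress_singleton_eq_self hc ▸ hxF A hA)
  · refine absurd ⟨x, fun A hA => ?_⟩ hnt
    by_cases hc : j ∈ A ∧ i ∉ A
    · have := hxF A hA
      rw [compress_singleton_of_mem_of_notMem hij hc.1 hc.2, mem_insert] at this
      exact (mem_erase.1 (this.resolve_left hxi)).2
    · exact compress_singleton_eq_self hc ▸ hxF A hA

end Families

section Shifting

variable {i j z : ℕ} {V S A : Finset ℕ} {F X Y : Finset (Finset ℕ)} {k l : ℕ}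

def weight (F : Finset (Finset ℕ)) : ℕ := ∑ A ∈ F, ∑ a ∈ A, 2 ^ a

/-- `∑ a ∈ A, 2 ^ a` is strictly monotone in the colex order, and a nontrivial compression moves
sets down in colex. -/
theorem weight_compression_lt (hij : i < j) (h : ¬ IsCompressed {i} {j} F) :
    weight (𝓒 {i} {j} F) < weight F := by
  have hmax : ({i} : Finset ℕ).max' (singleton_nonempty i) <
      ({j} : Finset ℕ).max' (singleton_nonempty j) := by simpa using hij
  unfold IsCompressed at h
  rw [UV.compression] at h ⊢
  have hmoved : ∀ A ∈ {A ∈ F | compress {i} {j} A ∉ F}, compress {i} {j} A ≠ A := by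
    simp_rw [mem_filter]
    rintro A ⟨hA, hA'⟩ hAA
    exact hA' (by rwa [hAA])
  have hsplit : {A ∈ F | compress {i} {j} A ∈ F} ∪ {A ∈ F | compress {i} {j} A ∉ F} = F :=
    filter_union_filter_not_eq _ _
  have hne : {A ∈ F | compress {i} {j} A ∉ F}.Nonempty := by
    refine nonempty_iff_ne_empty.2 fun hemp => h ?_
    rw [filter_image, hemp, image_empty, union_empty]
    rwa [hemp, union_empty] at hsplit
  rw [weight, weight, sum_union compress_disjoint]
  conv_rhs => rw [← hsplit]
  rw [sum_union (disjoint_filter_filter_not _ _ _), add_lt_add_iff_left, filter_image,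
    sum_image compress_injOn]
  refine sum_lt_sum_of_nonempty hne fun A hA => ?_
  rw [geomSum_lt_geomSum_iff_toColex_lt_toColex le_rfl]
  exact toColex_compress_lt_toColex hmax (hmoved A hA)

theorem weight_compression_le (hij : i < j) : weight (𝓒 {i} {j} F) ≤ weight F := by
  by_cases h : IsCompressed {i} {j} F
  · rw [h.eq]
  · exact (weight_compression_lt hij h).le

def Shifted (V : Finset ℕ) (F : Finset (Finset ℕ)) : Prop :=
  ∀ i ∈ V, ∀ j ∈ V, i < j → IsCompressed {i} {j} F

theorem shifting_induction {P : Finset (Finset ℕ) → Finset (Finset ℕ) → Prop}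
    (of_shifted : ∀ X Y, Shifted V X → Shifted V Y → P X Y)
    (of_compression : ∀ X Y, ∀ i ∈ V, ∀ j ∈ V, i < j → P (𝓒 {i} {j} X) (𝓒 {i} {j} Y) → P X Y)
    (X Y : Finset (Finset ℕ)) : P X Y := by
  induction hw : weight X + weight Y using Nat.strong_induction_on generalizing X Y with
  | _ w ih =>
  by_cases hsh : Shifted V X ∧ Shifted V Y
  · exact of_shifted X Y hsh.1 hsh.2
  obtain ⟨i, hi, j, hj, hij, hc⟩ : ∃ i ∈ V, ∃ j ∈ V, i < j ∧
      ¬ (IsCompressed {i} {j} X ∧ IsCompressed {i} {j} Y) := by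
    by_contra! hall
    exact hsh ⟨fun i hi j hj hij => (hall i hi j hj hij).1,
      fun i hi j hj hij => (hall i hi j hj hij).2⟩
  refine of_compression X Y i hi j hj hij (ih _ ?_ _ _ rfl)
  have hX := weight_compression_le (F := X) hij
  have hY := weight_compression_le (F := Y) hij
  rcases not_and_or.1 hc with h | h
  · have := weight_compression_lt hij h
    omega
  · have := weight_compression_lt hij h
    omega

theorem shifting_induction_single {P : Finset (Finset ℕ) → Prop}
    (of_shifted : ∀ F, Shifted V F → P F)
    (of_compression : ∀ F, ∀ i ∈ V, ∀ j ∈ V, i < j → P (𝓒 {i} {j} F) → P F)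
    (F : Finset (Finset ℕ)) : P F :=
  shifting_induction (P := fun F _ => P F) (fun F _ hF _ => of_shifted F hF)
    (fun F _ i hi j hj hij h => of_compression F i hi j hj hij h) F F

theorem Shifted.insert_erase_mem (hF : Shifted V F) (hi : i ∈ V) (hj : j ∈ V) (hij : i < j)
    (hA : A ∈ F) (hjA : j ∈ A) (hiA : i ∉ A) : insert i (A.erase j) ∈ F := by
  have h := compress_mem_compression (u := {i}) (v := {j}) hA
  rwa [(hF i hi j hj hij).eq, compress_singleton_of_mem_of_notMem hij.ne hjA hiA] at h

theorem exists_mem_notMem_of_card_le (hz : ∀ x ∈ V, x < z) (hzS : z ∈ S) (hS : #S ≤ #V) :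
    ∃ j ∈ V, j ∉ S := by
  have hpos := card_pos.2 ⟨z, hzS⟩
  obtain ⟨j, hjV, hj⟩ := exists_mem_notMem_of_card_lt_card (s := S.erase z) (t := V)
    (by rw [card_erase_of_mem hzS]; omega)
  exact ⟨j, hjV, fun hjS => hj (mem_erase.2 ⟨(hz j hjV).ne, hjS⟩)⟩

theorem Shifted.nonMemberSubfamily_nonempty (hz : ∀ x ∈ V, x < z) (hF : Shifted (insert z V) F)
    (hFV : F ⊆ (insert z V).powersetCard k) (hk : k ≤ #V) (hne : F.Nonempty) :
    (F.nonMemberSubfamily z).Nonempty := by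
  obtain ⟨A, hA⟩ := hne
  by_cases hzA : z ∈ A
  · obtain ⟨j, hjV, hjA⟩ := exists_mem_notMem_of_card_le hz hzA
      (by rw [(mem_powersetCard.1 (hFV hA)).2]; exact hk)
    refine ⟨insert j (A.erase z), mem_nonMemberSubfamily.2 ⟨?_, ?_⟩⟩
    · exact hF.insert_erase_mem (mem_insert_of_mem hjV) (mem_insert_self z V) (hz j hjV) hA
        hzA hjA
    · simp [(hz j hjV).ne']
  · exact ⟨A, mem_nonMemberSubfamily.2 ⟨hA, hzA⟩⟩

/-- If `T ∪ {z}` and `S ∪ {z}` met only in the top element `z`, shifting `z` down to an element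
missing from both would produce a member of `X` disjoint from `S ∪ {z}`. -/
theorem Shifted.crossIntersecting_memberSubfamily (hz : ∀ x ∈ V, x < z)
    (hX : Shifted (insert z V) X) (hXY : CrossIntersecting X Y)
    (hXV : X ⊆ (insert z V).powersetCard k) (hYV : Y ⊆ (insert z V).powersetCard l)
    (hkl : k + l ≤ #V + 1) : CrossIntersecting (X.memberSubfamily z) (Y.memberSubfamily z) := by
  intro T hT S hS
  rw [mem_memberSubfamily] at hT hS
  by_contra hTS
  have hcard : #(insert z (T ∪ S)) ≤ #V := by
    have hT' := (mem_powersetCard.1 (hXV hT.1)).2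
    have hS' := (mem_powersetCard.1 (hYV hS.1)).2
    rw [card_insert_of_notMem hT.2] at hT'
    rw [card_insert_of_notMem hS.2] at hS'
    rw [card_insert_of_notMem (by simp [hT.2, hS.2]),
      card_union_of_disjoint (disjoint_iff_inter_eq_empty.2 (not_nonempty_iff_eq_empty.1 hTS))]
    omega
  obtain ⟨j, hjV, hj⟩ := exists_mem_notMem_of_card_le hz (mem_insert_self z _) hcard
  simp only [mem_insert, mem_union, not_or] at hj
  have hmem := hX.insert_erase_mem (mem_insert_of_mem hjV) (mem_insert_self z V) (hz j hjV)
    hT.1 (mem_insert_self z T) (by simp [hj.1, hj.2.1])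
  rw [erase_insert hT.2] at hmem
  obtain ⟨s, hs⟩ := hXY _ hmem _ hS.1
  simp only [mem_inter, mem_insert] at hs
  obtain ⟨rfl | hsT, rfl | hsS⟩ := hs
  · exact hj.1 rfl
  · exact hj.2.2 hsS
  · exact hT.2 hsT
  · exact hTS ⟨s, mem_inter.2 ⟨hsT, hsS⟩⟩

end Shifting

section Hilton

variable {z l : ℕ} {V : Finset ℕ} {X Y : Finset (Finset ℕ)}

def HiltonCrossBound (V : Finset ℕ) : Prop :=
  ∀ l (X Y : Finset (Finset ℕ)), 2 * l ≤ #V → X ⊆ V.powersetCard l → Y ⊆ V.powersetCard l →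
    X.Nonempty → Y.Nonempty → CrossIntersecting X Y →
    #X + #Y + (#V - l).choose l ≤ (#V).choose l + 1

theorem HiltonCrossBound.card_add_card_le_of_shifted (ih : HiltonCrossBound V)
    (hz : ∀ x ∈ V, x < z) (hlV : 2 * l ≤ #V)
    (hX : X ⊆ (insert z V).powersetCard l) (hY : Y ⊆ (insert z V).powersetCard l)
    (hXne : X.Nonempty) (hYne : Y.Nonempty) (hXY : CrossIntersecting X Y)
    (hXs : Shifted (insert z V) X) (hYs : Shifted (insert z V) Y) :
    #X + #Y + (#V + 1 - l).choose l ≤ (#V + 1).choose l + 1 := by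
  have hV : (insert z V).erase z = V := erase_insert fun h => lt_irrefl z (hz z h)
  have hl := hXY.pos_of_subset_powersetCard hX hXne hYne
  have hX₀ := hV ▸ nonMemberSubfamily_subset_powersetCard hX z
  have hY₀ := hV ▸ nonMemberSubfamily_subset_powersetCard hY z
  have hX₁ := hV ▸ memberSubfamily_subset_powersetCard hX z
  have hY₁ := hV ▸ memberSubfamily_subset_powersetCard hY z
  have hX₀ne := hXs.nonMemberSubfamily_nonempty hz hX (by omega) hXne
  have hY₀ne := hYs.nonMemberSubfamily_nonempty hz hY (by omega) hYne
  have h₀ := ih l _ _ hlV hX₀ hY₀ hX₀ne hY₀ne (hXY.mono (filter_subset _ _) (filter_subset _ _))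
  have h₁ : #(X.memberSubfamily z) + #(Y.memberSubfamily z) + (#V - l).choose (l - 1) ≤
      (#V).choose (l - 1) := by
    rcases (X.memberSubfamily z).eq_empty_or_nonempty with hX₁e | hX₁ne
    · obtain ⟨A, hA⟩ := hX₀ne
      have hA' := mem_powersetCard.1 (hX₀ hA)
      have := card_add_choose_le_of_forall_inter_nonempty hY₁ hA'.1
        fun B hB => hXY.symm.memberSubfamily_nonMemberSubfamily z B hB A hA
      rw [hA'.2] at this
      rw [hX₁e, card_empty]
      omega
    rcases (Y.memberSubfamily z).eq_empty_or_nonempty with hY₁e | hY₁ne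
    · obtain ⟨B, hB⟩ := hY₀ne
      have hB' := mem_powersetCard.1 (hY₀ hB)
      have := card_add_choose_le_of_forall_inter_nonempty hX₁ hB'.1
        fun A hA => hXY.memberSubfamily_nonMemberSubfamily z A hA B hB
      rw [hB'.2] at this
      rw [hY₁e, card_empty]
      omega
    have hXY₁ := hXs.crossIntersecting_memberSubfamily hz hXY hX hY (by omega)
    have hl₁ := hXY₁.pos_of_subset_powersetCard hX₁ hX₁ne hY₁ne
    have := ih (l - 1) _ _ (by omega) hX₁ hY₁ hX₁ne hY₁ne hXY₁
    rw [show #V - (l - 1) = #V - l + 1 by omega, Nat.choose_succ_left _ _ hl₁] at this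
    have := Nat.choose_pos (n := #V - l) (k := l - 1 - 1) (by omega)
    omega
  have := card_memberSubfamily_add_card_nonMemberSubfamily z X
  have := card_memberSubfamily_add_card_nonMemberSubfamily z Y
  rw [Nat.choose_succ_left _ _ hl, show #V + 1 - l = #V - l + 1 by omega,
    Nat.choose_succ_left _ _ hl]
  omega

theorem HiltonCrossBound.insert_of_forall_lt (ih : HiltonCrossBound V) (hz : ∀ x ∈ V, x < z) :
    HiltonCrossBound (insert z V) := by
  have hcard : #(insert z V) = #V + 1 := card_insert_of_notMem fun h => lt_irrefl z (hz z h)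
  intro l X Y hlV hX hY hXne hYne hXY
  rw [hcard] at hlV ⊢
  rcases hlV.eq_or_lt with hl | hl
  · have := hXY.card_add_card_le_choose hX hY (by omega)
    rw [show #V + 1 - l = l by omega, Nat.choose_self, ← hcard]
    omega
  revert X Y
  refine shifting_induction (V := insert z V) (fun X Y hXs hYs hX hY hXne hYne hXY => ?_)
    (fun X Y i hi j _ hij h hX hY hXne hYne hXY => ?_)
  · exact ih.card_add_card_le_of_shifted hz (by omega) hX hY hXne hYne hXY hXs hYs
  · have := h (compression_subset_powersetCard hij.ne hi hX)
      (compression_subset_powersetCard hij.ne hi hY)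
      (by rwa [← card_pos, card_compression, card_pos])
      (by rwa [← card_pos, card_compression, card_pos]) (hXY.compression hij.ne)
    rwa [card_compression, card_compression] at this

theorem hiltonCrossBound (V : Finset ℕ) : HiltonCrossBound V := by
  induction V using Finset.induction_on_max with
  | empty =>
    intro l X Y hl hX _ hXne hYne hXY
    have := hXY.pos_of_subset_powersetCard hX hXne hYne
    rw [card_empty] at hl
    omega
  | insert z V hz ih => exact ih.insert_of_forall_lt hz

end Hilton

section Nontrivial

variable {z k : ℕ} {V : Finset ℕ} {F L G : Finset (Finset ℕ)}

/-- The members containing exactly one of `u`, `w`, with it removed, form two cross-intersecting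
families on `V \ {u, w}`, to which Hilton's bound applies. -/
theorem card_add_choose_le_of_forall_mem_or_mem {u w : ℕ} (hu : u ∈ V) (hw : w ∈ V) (huw : u ≠ w)
    (hkV : 2 * k ≤ #V) (hF : F ⊆ V.powersetCard k) (hint : CrossIntersecting F F)
    (hnt : ¬ HasCommonElement F) (hcov : ∀ A ∈ F, u ∈ A ∨ w ∈ A) :
    #F + (#V - k - 1).choose (k - 1) ≤ (#V - 1).choose (k - 1) + 1 := by
  have hk := two_le_of_not_hasCommonElement hF hint hnt
  have hW : #((V.erase u).erase w) = #V - 2 := by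
    rw [card_erase_of_mem (mem_erase.2 ⟨huw.symm, hw⟩), card_erase_of_mem hu]
    omega
  have hX := nonMemberSubfamily_subset_powersetCard (memberSubfamily_subset_powersetCard hF u) w
  have hY := memberSubfamily_subset_powersetCard (nonMemberSubfamily_subset_powersetCard hF u) w
  have hZ := memberSubfamily_subset_powersetCard (memberSubfamily_subset_powersetCard hF u) w
  have hXne : ((F.memberSubfamily u).nonMemberSubfamily w).Nonempty := by
    obtain ⟨A, hA, hwA⟩ : ∃ A ∈ F, w ∉ A := by
      by_contra! h
      exact hnt ⟨w, h⟩
    refine ⟨A.erase u, mem_nonMemberSubfamily.2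
      ⟨erase_mem_memberSubfamily hA ((hcov A hA).resolve_right hwA), fun h => hwA ?_⟩⟩
    exact mem_of_mem_erase h
  have hYne : ((F.nonMemberSubfamily u).memberSubfamily w).Nonempty := by
    obtain ⟨A, hA, huA⟩ : ∃ A ∈ F, u ∉ A := by
      by_contra! h
      exact hnt ⟨u, h⟩
    exact ⟨A.erase w, erase_mem_memberSubfamily (mem_nonMemberSubfamily.2 ⟨hA, huA⟩)
      ((hcov A hA).resolve_left huA)⟩
  have hXY := ((hint.memberSubfamily_nonMemberSubfamily u).symm.memberSubfamily_nonMemberSubfamily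
    w).symm
  have hcross := hiltonCrossBound _ (k - 1) _ _ (by omega) hX hY hXne hYne hXY
  have hcovered : (F.nonMemberSubfamily u).nonMemberSubfamily w = ∅ := by
    refine filter_false_of_mem fun A hA => ?_
    rw [mem_nonMemberSubfamily] at hA
    simpa using (hcov A hA.1).resolve_left hA.2
  have hsplit := card_memberSubfamily_add_card_nonMemberSubfamily u F
  have hsplitu := card_memberSubfamily_add_card_nonMemberSubfamily w (F.memberSubfamily u)
  have hsplitū := card_memberSubfamily_add_card_nonMemberSubfamily w (F.nonMemberSubfamily u)
  have hZcard := (card_le_card hZ).trans_eq (card_powersetCard _ _)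
  rw [hcovered, card_empty] at hsplitū
  rw [hW, show #V - 2 - (k - 1) = #V - k - 1 by omega] at hcross
  rw [hW, show k - 1 - 1 = k - 2 by omega] at hZcard
  rw [show #V - 1 = #V - 2 + 1 by omega, Nat.choose_succ_left _ _ (by omega),
    show k - 1 - 1 = k - 2 by omega]
  omega

def HiltonMilnerBound (V : Finset ℕ) : Prop :=
  ∀ k (F : Finset (Finset ℕ)), 2 * k ≤ #V → F ⊆ V.powersetCard k → CrossIntersecting F F →
    ¬ HasCommonElement F → #F + (#V - k - 1).choose (k - 1) ≤ (#V - 1).choose (k - 1) + 1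

theorem HiltonMilnerBound.card_add_choose_le_of_crossIntersecting (ih : HiltonMilnerBound V)
    (hkV : 2 * k ≤ #V) (hL : L ⊆ V.powersetCard (k - 1)) (hLL : CrossIntersecting L L)
    (hG : G ⊆ V.powersetCard k) (hLG : CrossIntersecting L G) (hGnt : ¬ HasCommonElement G) :
    #L + (#V - k - 1).choose (k - 2) ≤ (#V - 1).choose (k - 2) := by
  by_cases hLc : HasCommonElement L
  · obtain ⟨y, hy⟩ := hLc
    rcases L.eq_empty_or_nonempty with rfl | ⟨T, hT⟩
    · simpa using Nat.choose_le_choose _ (by omega)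
    have hyV : y ∈ V := (mem_powersetCard.1 (hL hT)).1 (hy T hT)
    obtain ⟨B, hB, hyB⟩ : ∃ B ∈ G, y ∉ B := by
      by_contra! h
      exact hGnt ⟨y, h⟩
    have hB' := mem_powersetCard.1 (hG hB)
    have := card_add_choose_le_of_forall_inter_nonempty (memberSubfamily_subset_powersetCard hL y)
      (subset_erase.2 ⟨hB'.1, hyB⟩) fun A hA =>
        hLG.memberSubfamily_nonMemberSubfamily y A hA B (mem_nonMemberSubfamily.2 ⟨hB, hyB⟩)
    rwa [card_memberSubfamily_of_forall_mem hy, card_erase_of_mem hyV, hB'.2,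
      show #V - 1 - k = #V - k - 1 by omega, show k - 1 - 1 = k - 2 by omega] at this
  · have hk' := two_le_of_not_hasCommonElement hL hLL hLc
    have := ih (k - 1) L (by omega) hL hLL hLc
    rw [show #V - (k - 1) - 1 = #V - k - 1 + 1 by omega, show k - 1 - 1 = k - 2 by omega,
      Nat.choose_succ_left _ _ (by omega)] at this
    have := Nat.choose_pos (n := #V - k - 1) (k := k - 2 - 1) (by omega)
    omega

theorem HiltonMilnerBound.card_add_choose_le_of_shifted (ih : HiltonMilnerBound V)
    (hz : ∀ x ∈ V, x < z) (hkV : 2 * k ≤ #V) (hF : F ⊆ (insert z V).powersetCard k)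
    (hint : CrossIntersecting F F) (hnt : ¬ HasCommonElement F) (hFs : Shifted (insert z V) F) :
    #F + (#V - k).choose (k - 1) ≤ (#V).choose (k - 1) + 1 := by
  have hzV : z ∉ V := fun h => lt_irrefl z (hz z h)
  have hV : (insert z V).erase z = V := erase_insert hzV
  have hk := two_le_of_not_hasCommonElement hF hint hnt
  have hF₀ := hV ▸ nonMemberSubfamily_subset_powersetCard hF z
  have hF₁ := hV ▸ memberSubfamily_subset_powersetCard hF z
  by_cases hF₀c : HasCommonElement (F.nonMemberSubfamily z)
  · obtain ⟨y, hy⟩ := hF₀c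
    obtain ⟨B, hB⟩ := hFs.nonMemberSubfamily_nonempty hz hF (by omega)
      (nonempty_of_not_hasCommonElement hnt)
    have hyV := (mem_powersetCard.1 (hF₀ hB)).1 (hy B hB)
    have := card_add_choose_le_of_forall_mem_or_mem (mem_insert_of_mem hyV) (mem_insert_self z V)
      (hz y hyV).ne (by rw [card_insert_of_notMem hzV]; omega) hF hint hnt fun A hA => by
        by_cases hzA : z ∈ A
        · exact Or.inr hzA
        · exact Or.inl (hy A (mem_nonMemberSubfamily.2 ⟨hA, hzA⟩))
    rwa [card_insert_of_notMem hzV, Nat.add_sub_cancel,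
      show #V + 1 - k - 1 = #V - k by omega] at this
  have h₀ := ih k _ hkV hF₀ (hint.mono (filter_subset _ _) (filter_subset _ _)) hF₀c
  have h₁ := ih.card_add_choose_le_of_crossIntersecting hkV hF₁
    (hFs.crossIntersecting_memberSubfamily hz hint hF hF (by omega)) hF₀
    (hint.memberSubfamily_nonMemberSubfamily z) hF₀c
  have := card_memberSubfamily_add_card_nonMemberSubfamily z F
  rw [show #V = #V - 1 + 1 by omega, Nat.choose_succ_left _ _ (by omega),
    show #V - 1 + 1 - k = #V - k - 1 + 1 by omega, Nat.choose_succ_left _ _ (by omega),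
    show k - 1 - 1 = k - 2 by omega]
  omega

theorem HiltonMilnerBound.insert_of_forall_lt (ih : HiltonMilnerBound V) (hz : ∀ x ∈ V, x < z) :
    HiltonMilnerBound (insert z V) := by
  have hcard : #(insert z V) = #V + 1 := card_insert_of_notMem fun h => lt_irrefl z (hz z h)
  intro k F hkV hF hint hnt
  have hk := two_le_of_not_hasCommonElement hF hint hnt
  rw [hcard] at hkV ⊢
  rw [Nat.add_sub_cancel, show #V + 1 - k - 1 = #V - k by omega]
  rcases hkV.eq_or_lt with hkV | hkV
  · have := hint.card_add_card_le_choose hF hF (by omega)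
    rw [hcard, Nat.choose_succ_left _ _ (by omega),
      Nat.choose_symm_of_eq_add (show #V = k + (k - 1) by omega)] at this
    rw [show #V - k = k - 1 by omega, Nat.choose_self]
    omega
  revert F
  refine shifting_induction_single (V := insert z V) (fun F hFs hF hint hnt => ?_)
    (fun F i hi j hj hij h hF hint hnt => ?_)
  · exact ih.card_add_choose_le_of_shifted hz (by omega) hF hint hnt hFs
  by_cases hc : HasCommonElement (𝓒 {i} {j} F)
  · have := card_add_choose_le_of_forall_mem_or_mem hi hj hij.ne (by omega) hF hint hnt
      (forall_mem_or_mem_of_hasCommonElement_compression hij.ne hnt hc)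
    rwa [hcard, Nat.add_sub_cancel, show #V + 1 - k - 1 = #V - k by omega] at this
  · have := h (compression_subset_powersetCard hij.ne hi hF) (hint.compression hij.ne) hc
    rwa [card_compression] at this

theorem hiltonMilnerBound (V : Finset ℕ) : HiltonMilnerBound V := by
  induction V using Finset.induction_on_max with
  | empty =>
    intro k F hk hF hint hnt
    have := two_le_of_not_hasCommonElement hF hint hnt
    rw [card_empty] at hk
    omega
  | insert z V hz ih => exact ih.insert_of_forall_lt hz

end Nontrivial

end HiltonMilner

theorem hilton_milner_general (n k : ℕ) (hnk : 2 * k < n)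
    (F : Finset (Finset ℕ))
    (hF : F ⊆ (Finset.Icc 1 n).powersetCard k)
    (hint : ∀ A ∈ F, ∀ B ∈ F, (A ∩ B).Nonempty)
    (hnontriv : ¬ ∃ x, ∀ A ∈ F, x ∈ A) :
    F.card ≤ (n - 1).choose (k - 1) - (n - k - 1).choose (k - 1) + 1 := by
  have h := HiltonMilner.hiltonMilnerBound (Icc 1 n) k F (by rw [Nat.card_Icc]; omega) hF hint
    hnontriv
  rw [Nat.card_Icc, Nat.add_sub_cancel] at h
  have := Nat.choose_le_choose (k - 1) (show n - k - 1 ≤ n - 1 by omega)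
  omega

/-- **Hilton–Milner theorem.** If `n > 2k > 0` and `F` is a nontrivially intersecting
family of `k`-element subsets of `[n] = {1, ..., n}` (intersecting, but with no element
common to all members), then `|F| ≤ C(n-1, k-1) - C(n-k-1, k-1) + 1`. -/
theorem hilton_milner (n k : ℕ) (hk : 0 < k) (hnk : 2 * k < n)
    (F : Finset (Finset ℕ))
    (hF : F ⊆ (Finset.Icc 1 n).powersetCard k)
    (hint : ∀ A ∈ F, ∀ B ∈ F, (A ∩ B).Nonempty)
    (hnontriv : ¬ ∃ x, ∀ A ∈ F, x ∈ A) :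
    F.card ≤ (n - 1).choose (k - 1) - (n - k - 1).choose (k - 1) + 1 :=
  hilton_milner_general n k hnk F hF hint hnontriv
end

section
/- Let n > 2k > 0 and k ≥ 2. The family H consisting of the set {2,...,k+1} together with all sets A ∈ C([n],k) such that 1 ∈ A and A ∩ {2,...,k+1} ≠ ∅ is nontrivially intersecting and satisfies |H| = C(n−1, k−1) − C(n−k−1, k−1) + 1. -/
/-!
The family is a `k`-set `t` together with the `k`-sets through a point `a ∉ t` that meet `t`.
Every member other than `t` contains `a` and meets `t`, so the family is intersecting;
no point is common to all members, since a point `x ∈ t` is missed by `(t \ {x}) ∪ {a}`. The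
members other than `t` are the `k`-sets through `a` minus those through `a` avoiding `t`, and
each of these two classes is counted as the `(k-1)`-subsets of a ground set with `a` removed.
-/

open Finset

namespace Finset

variable {α : Type*} [DecidableEq α] {s t : Finset α} {a : α} {k : ℕ}

theorem card_filter_powersetCard_mem (ha : a ∈ s) (hk : 1 ≤ k) :
    #{A ∈ s.powersetCard k | a ∈ A} = (#s - 1).choose (k - 1) := by
  simpa only [singleton_subset_iff, card_singleton] using
    card_filter_powersetCard_subset {a} s k (singleton_subset_iff.mpr ha) (by simpa using hk)

theorem filter_powersetCard_mem_disjoint :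
    {A ∈ s.powersetCard k | a ∈ A ∧ Disjoint A t} = {A ∈ (s \ t).powersetCard k | a ∈ A} := by
  ext A
  simp only [mem_filter, mem_powersetCard, subset_sdiff]
  tauto

theorem card_filter_powersetCard_mem_inter_nonempty (ha : a ∈ s) (hat : a ∉ t) (hk : 1 ≤ k) :
    #{A ∈ s.powersetCard k | a ∈ A ∧ (A ∩ t).Nonempty}
      = (#s - 1).choose (k - 1) - (#(s \ t) - 1).choose (k - 1) := by
  have hsplit : #{A ∈ s.powersetCard k | a ∈ A ∧ Disjoint A t}
      + #{A ∈ s.powersetCard k | a ∈ A ∧ (A ∩ t).Nonempty} = #{A ∈ s.powersetCard k | a ∈ A} := by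
    simp only [← not_disjoint_iff_nonempty_inter, ← filter_filter]
    exact card_filter_add_card_filter_not _
  rw [filter_powersetCard_mem_disjoint, card_filter_powersetCard_mem (mem_sdiff.mpr ⟨ha, hat⟩) hk,
    card_filter_powersetCard_mem ha hk] at hsplit
  omega

def hiltonMilnerFamily (s t : Finset α) (a : α) (k : ℕ) : Finset (Finset α) :=
  insert t {A ∈ s.powersetCard k | a ∈ A ∧ (A ∩ t).Nonempty}

theorem hiltonMilnerFamily_intersecting (ht : t.Nonempty) :
    (hiltonMilnerFamily s t a k : Set (Finset α)).Intersecting := by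
  intro A hA B hB
  simp only [hiltonMilnerFamily, coe_insert, Set.mem_insert_iff, mem_coe, mem_filter] at hA hB
  rw [not_disjoint_iff_nonempty_inter]
  rcases hA with rfl | ⟨-, haA, hAt⟩ <;> rcases hB with rfl | ⟨-, haB, hBt⟩
  · simpa using ht
  · rwa [inter_comm]
  · exact hAt
  · exact ⟨a, mem_inter.mpr ⟨haA, haB⟩⟩

theorem hiltonMilnerFamily_exists_notMem (hts : t ⊆ s) (ha : a ∈ s) (hat : a ∉ t)
    (hk : #t = k) (ht : 2 ≤ #t) (x : α) : ∃ A ∈ hiltonMilnerFamily s t a k, x ∉ A := by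
  by_cases hxt : x ∈ t
  swap
  · exact ⟨t, mem_insert_self _ _, hxt⟩
  -- Swap `x` for `a` in `t`: since `#t ≥ 2`, the result still meets `t`.
  have hat' : a ∉ t.erase x := fun h => hat (mem_of_mem_erase h)
  obtain ⟨y, hy⟩ : (t.erase x).Nonempty := by
    rw [← card_pos, card_erase_of_mem hxt]
    omega
  refine ⟨insert a (t.erase x), mem_insert_of_mem (mem_filter.mpr ⟨?_, mem_insert_self _ _, ?_⟩), ?_⟩
  · refine mem_powersetCard.mpr ⟨insert_subset ha ((erase_subset _ _).trans hts), ?_⟩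
    rw [card_insert_of_notMem hat', card_erase_of_mem hxt]
    omega
  · exact ⟨y, mem_inter.mpr ⟨mem_insert_of_mem hy, mem_of_mem_erase hy⟩⟩
  · rw [mem_insert, mem_erase]
    rintro (rfl | ⟨hne, -⟩)
    exacts [hat hxt, hne rfl]

theorem card_hiltonMilnerFamily (hts : t ⊆ s) (ha : a ∈ s) (hat : a ∉ t) (hk : #t = k)
    (hk1 : 1 ≤ k) :
    #(hiltonMilnerFamily s t a k) = (#s - 1).choose (k - 1) - (#s - k - 1).choose (k - 1) + 1 := by
  have ht : t ∉ {A ∈ s.powersetCard k | a ∈ A ∧ (A ∩ t).Nonempty} := fun h =>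
    hat (mem_filter.mp h).2.1
  rw [hiltonMilnerFamily, card_insert_of_notMem ht,
    card_filter_powersetCard_mem_inter_nonempty ha hat hk1, card_sdiff_of_subset hts, hk]

end Finset

/-- The Hilton–Milner family: `{2, ..., k+1}` together with all `k`-element subsets of
`[n]` containing `1` and meeting `{2, ..., k+1}`, is nontrivially intersecting and has
cardinality `C(n-1, k-1) - C(n-k-1, k-1) + 1`. -/
theorem hilton_milner_example (n k : ℕ) (hk : 2 ≤ k) (hnk : 2 * k < n)
    (H : Finset (Finset ℕ))
    (hH : H = insert (Finset.Icc 2 (k + 1))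
      (((Finset.Icc 1 n).powersetCard k).filter
        (fun A => 1 ∈ A ∧ (A ∩ Finset.Icc 2 (k + 1)).Nonempty))) :
    (∀ A ∈ H, ∀ B ∈ H, (A ∩ B).Nonempty) ∧
    (¬ ∃ x, ∀ A ∈ H, x ∈ A) ∧
    H.card = (n - 1).choose (k - 1) - (n - k - 1).choose (k - 1) + 1 := by
  change H = hiltonMilnerFamily (Icc 1 n) (Icc 2 (k + 1)) 1 k at hH
  subst hH
  have hts : Icc 2 (k + 1) ⊆ Icc 1 n := Icc_subset_Icc (by omega) (by omega)
  have ha : 1 ∈ Icc 1 n := mem_Icc.mpr ⟨le_rfl, by omega⟩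
  have hat : 1 ∉ Icc 2 (k + 1) := by simp
  have hcard : #(Icc 2 (k + 1)) = k := by simp
  refine ⟨fun A hA B hB => ?_, ?_, ?_⟩
  · exact not_disjoint_iff_nonempty_inter.mp
      (hiltonMilnerFamily_intersecting (nonempty_Icc.mpr (by omega)) hA hB)
  · push Not
    exact hiltonMilnerFamily_exists_notMem hts ha hat hcard (by omega)
  · simpa using card_hiltonMilnerFamily hts ha hat hcard (by omega)
end

section
/- Let n ≥ 2k > 0 and let F ⊆ C([n],k) be a shifted intersecting family. Then every member F ∈ F satisfies |F ∩ [2l−1]| = l for some integer l ≥ 1. -/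
/-- The `(i,j)`-shift of a set: replace `j` by `i` if `j ∈ A` and `i ∉ A`. -/
def shiftSet (i j : ℕ) (A : Finset ℕ) : Finset ℕ :=
  if i ∈ A ∨ j ∉ A then A else insert i (A.erase j)

/-- The `(i,j)`-shift of a family:
`S_{i,j}(F) = {S_{i,j}(A) : A ∈ F} ∪ {A ∈ F : S_{i,j}(A) ∈ F}`. -/
def shiftFam (i j : ℕ) (F : Finset (Finset ℕ)) : Finset (Finset ℕ) :=
  F.image (shiftSet i j) ∪ F.filter (fun A => shiftSet i j A ∈ F)

open Finset

namespace Halving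

/-- count of elements ≤ m -/
def cnt (X : Finset ℕ) (m : ℕ) : ℕ := (X.filter (· ≤ m)).card

lemma cnt_mono (X : Finset ℕ) {m m' : ℕ} (h : m ≤ m') : cnt X m ≤ cnt X m' := by
  apply Finset.card_le_card
  intro x hx
  simp only [mem_filter] at hx ⊢
  exact ⟨hx.1, le_trans hx.2 h⟩

lemma cnt_le_card (X : Finset ℕ) (m : ℕ) : cnt X m ≤ X.card :=
  Finset.card_le_card (filter_subset _ _)

lemma cnt_tail (X : Finset ℕ) (m : ℕ) :
    cnt X m + (X.filter (fun x => m < x)).card = X.card := by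
  have h := Finset.card_filter_add_card_filter_not (s := X) (p := (· ≤ m))
  simpa [cnt, not_le] using h

lemma shift_mem {n : ℕ} {F : Finset (Finset ℕ)}
    (hshift : ∀ i j, 1 ≤ i → i < j → j ≤ n → shiftFam i j F = F)
    {A : Finset ℕ} (hA : A ∈ F) {i j : ℕ} (h1 : 1 ≤ i) (hij : i < j) (hj : j ≤ n) :
    shiftSet i j A ∈ F := by
  rw [← hshift i j h1 hij hj]
  exact Finset.mem_union_left _ (Finset.mem_image_of_mem _ hA)

lemma pushdown (n : ℕ) (F : Finset (Finset ℕ))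
    (hshift : ∀ i j, 1 ≤ i → i < j → j ≤ n → shiftFam i j F = F) :
    ∀ s : ℕ, ∀ A ∈ F, A ⊆ Finset.Icc 1 n → A.sum id ≤ s →
      ∀ B ⊆ Finset.Icc 1 n, B.card = A.card →
      (∀ m, cnt A m ≤ cnt B m) → B ∈ F := by
  intro s
  induction s with
  | zero =>
    intro A hA hAn hsum B hBn hcard _
    have hAe : A = ∅ := by
      by_contra h
      obtain ⟨x, hx⟩ := Finset.nonempty_iff_ne_empty.2 h
      have hx1 : 1 ≤ x := (Finset.mem_Icc.1 (hAn hx)).1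
      have hle : x ≤ A.sum id := by
        simpa using Finset.single_le_sum (f := id) (fun i _ => Nat.zero_le _) hx
      omega
    have hBe : B = ∅ := Finset.card_eq_zero.1 (by rw [hcard, hAe]; simp)
    rw [hBe, ← hAe]; exact hA
  | succ s ih =>
    intro A hA hAn hsum B hBn hcard hdom
    by_cases hAB : B = A
    · rw [hAB]; exact hA
    -- A \ B and B \ A nonempty
    have hABne : (A \ B).Nonempty := by
      rw [Finset.sdiff_nonempty]
      intro h
      exact hAB (Finset.eq_of_subset_of_card_le h hcard.le).symm
    have hBAne : (B \ A).Nonempty := by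
      rw [Finset.sdiff_nonempty]
      intro h
      exact hAB (Finset.eq_of_subset_of_card_le h hcard.ge)
    set j := (A \ B).max' hABne with hjdef
    set i := (B \ A).max' hBAne with hidef
    have hjmem : j ∈ A \ B := Finset.max'_mem _ _
    have himem : i ∈ B \ A := Finset.max'_mem _ _
    have hjA : j ∈ A := (Finset.mem_sdiff.1 hjmem).1
    have hjB : j ∉ B := (Finset.mem_sdiff.1 hjmem).2
    have hiB : i ∈ B := (Finset.mem_sdiff.1 himem).1
    have hiA : i ∉ A := (Finset.mem_sdiff.1 himem).2
    have hi1 : 1 ≤ i := (Finset.mem_Icc.1 (hBn hiB)).1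
    have hjn : j ≤ n := (Finset.mem_Icc.1 (hAn hjA)).2
    have hne : i ≠ j := fun h => hiA (h ▸ hjA)
    -- claim i < j
    have hij : i < j := by
      rcases lt_or_gt_of_ne hne with h | h
      · exact h
      exfalso
      -- j < i : derive contradiction with hdom (i-1)
      have hsub : A.filter (fun x => i ≤ x) ⊆ B.filter (fun x => i ≤ x) := by
        intro x hx
        simp only [mem_filter] at hx ⊢
        refine ⟨?_, hx.2⟩
        by_contra hxB
        have : x ≤ j := Finset.le_max' _ _ (Finset.mem_sdiff.2 ⟨hx.1, hxB⟩)
        omega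
      have hss : A.filter (fun x => i ≤ x) ⊂ B.filter (fun x => i ≤ x) := by
        refine Finset.ssubset_iff_of_subset hsub |>.2 ⟨i, ?_, ?_⟩
        · simp [mem_filter, hiB]
        · simp [mem_filter, hiA]
      have hlt := Finset.card_lt_card hss
      have e1 := cnt_tail A (i - 1)
      have e2 := cnt_tail B (i - 1)
      have hfA : A.filter (fun x => i - 1 < x) = A.filter (fun x => i ≤ x) := by
        apply Finset.filter_congr; intro x _; constructor <;> (intro; omega)
      have hfB : B.filter (fun x => i - 1 < x) = B.filter (fun x => i ≤ x) := by
        apply Finset.filter_congr; intro x _; constructor <;> (intro; omega)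
      rw [hfA] at e1; rw [hfB] at e2
      have := hdom (i - 1)
      omega
    have hj1 : 1 ≤ j := by omega
    -- A' ∈ F
    have hA'eq : shiftSet i j A = insert i (A.erase j) := by
      rw [shiftSet, if_neg]; push_neg; exact ⟨hiA, hjA⟩
    set A' := insert i (A.erase j) with hA'def
    have hA'F : A' ∈ F := hA'eq ▸ shift_mem hshift hA hi1 hij hjn
    have hiAe : i ∉ A.erase j := fun h => hiA (Finset.mem_of_mem_erase h)
    have hA'n : A' ⊆ Finset.Icc 1 n := by
      intro x hx
      rcases Finset.mem_insert.1 hx with h | h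
      · subst h; exact hBn hiB
      · exact hAn (Finset.mem_of_mem_erase h)
    have hA'card : A'.card = A.card := by
      rw [hA'def, Finset.card_insert_of_notMem hiAe, Finset.card_erase_of_mem hjA]
      have : 1 ≤ A.card := Finset.card_pos.2 ⟨j, hjA⟩
      omega
    have hA'sum : A'.sum id ≤ s := by
      have herase : (∑ x ∈ A.erase j, x) + j = ∑ x ∈ A, x := by
        simpa using Finset.sum_erase_add A id hjA
      have hsum' : (∑ x ∈ A, x) ≤ s + 1 := hsum
      rw [hA'def, Finset.sum_insert hiAe]
      show i + ∑ x ∈ A.erase j, x ≤ s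
      omega
    -- domination for A'
    have hdom' : ∀ m, cnt A' m ≤ cnt B m := by
      intro m
      rcases lt_or_ge m i with hm | hm
      · -- m < i : cnt A' m = cnt A m
        have : A'.filter (· ≤ m) = A.filter (· ≤ m) := by
          ext x
          simp only [hA'def, mem_filter, mem_insert, mem_erase]
          constructor
          · rintro ⟨h1, h2⟩
            rcases h1 with h | h
            · omega
            · exact ⟨h.2, h2⟩
          · rintro ⟨h1, h2⟩
            exact ⟨Or.inr ⟨by omega, h1⟩, h2⟩
        have hceq : cnt A' m = cnt A m := by unfold cnt; rw [this]
        rw [hceq]; exact hdom m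
      rcases lt_or_ge m j with hmj | hmj
      · -- i ≤ m < j : cnt A' m = cnt A m + 1, need strict
        have hfe : A'.filter (· ≤ m) = insert i (A.filter (· ≤ m)) := by
          ext x
          simp only [hA'def, mem_filter, mem_insert, mem_erase]
          constructor
          · rintro ⟨h1, h2⟩
            rcases h1 with h | h
            · exact Or.inl h
            · exact Or.inr ⟨h.2, h2⟩
          · rintro (h | ⟨h1, h2⟩)
            · exact ⟨Or.inl h, by omega⟩
            · exact ⟨Or.inr ⟨by omega, h1⟩, h2⟩
        have hiAf : i ∉ A.filter (· ≤ m) := fun h => hiA (Finset.mem_of_mem_filter _ h)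
        have hcA' : cnt A' m = cnt A m + 1 := by
          unfold cnt
          rw [hfe, Finset.card_insert_of_notMem hiAf]
        -- show cnt A m < cnt B m
        have hsub : B.filter (fun x => m < x) ⊆ A.filter (fun x => m < x) := by
          intro x hx
          simp only [mem_filter] at hx ⊢
          refine ⟨?_, hx.2⟩
          by_contra hxA
          have : x ≤ i := Finset.le_max' _ _ (Finset.mem_sdiff.2 ⟨hx.1, hxA⟩)
          omega
        have hss : B.filter (fun x => m < x) ⊂ A.filter (fun x => m < x) := by
          refine Finset.ssubset_iff_of_subset hsub |>.2 ⟨j, ?_, ?_⟩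
          · simp [mem_filter, hjA]; omega
          · simp [mem_filter, hjB]
        have hlt := Finset.card_lt_card hss
        have e1 := cnt_tail A m
        have e2 := cnt_tail B m
        omega
      · -- j ≤ m : cnt A' m = cnt A m
        have hfe : A'.filter (· ≤ m) = insert i ((A.filter (· ≤ m)).erase j) := by
          ext x
          simp only [hA'def, mem_filter, mem_insert, mem_erase]
          constructor
          · rintro ⟨h1, h2⟩
            rcases h1 with h | h
            · exact Or.inl h
            · exact Or.inr ⟨h.1, h.2, h2⟩
          · rintro (h | ⟨h1, h2, h3⟩)
            · exact ⟨Or.inl h, by omega⟩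
            · exact ⟨Or.inr ⟨h1, h2⟩, h3⟩
        have hiAf : i ∉ (A.filter (· ≤ m)).erase j :=
          fun h => hiA (Finset.mem_of_mem_filter _ (Finset.mem_of_mem_erase h))
        have hjAf : j ∈ A.filter (· ≤ m) := Finset.mem_filter.2 ⟨hjA, hmj⟩
        have hpos : 1 ≤ cnt A m := Finset.card_pos.2 ⟨j, hjAf⟩
        have hcA' : cnt A' m = cnt A m := by
          unfold cnt
          rw [hfe, Finset.card_insert_of_notMem hiAf, Finset.card_erase_of_mem hjAf]
          have hpos' : 1 ≤ (A.filter (· ≤ m)).card := hpos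
          omega
        rw [hcA']; exact hdom m
    exact ih A' hA'F hA'n hA'sum B hBn (hcard.trans hA'card.symm) hdom'

lemma inter_Icc_eq_filter {n : ℕ} {A : Finset ℕ} (hA : A ⊆ Finset.Icc 1 n) (m : ℕ) :
    A ∩ Finset.Icc 1 m = A.filter (· ≤ m) := by
  ext x
  simp only [Finset.mem_inter, Finset.mem_Icc, Finset.mem_filter]
  constructor
  · rintro ⟨h1, _, h3⟩; exact ⟨h1, h3⟩
  · rintro ⟨h1, h2⟩; exact ⟨h1, (Finset.mem_Icc.1 (hA h1)).1, h2⟩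

lemma main_aux (n k : ℕ) (hk : 0 < k) (hnk : 2 * k ≤ n)
    (F : Finset (Finset ℕ))
    (hF : F ⊆ (Finset.Icc 1 n).powersetCard k)
    (hint : ∀ A ∈ F, ∀ B ∈ F, (A ∩ B).Nonempty)
    (hshift : ∀ i j, 1 ≤ i → i < j → j ≤ n → shiftFam i j F = F) :
    ∀ A ∈ F, ∃ l : ℕ, 1 ≤ l ∧ (A ∩ Finset.Icc 1 (2 * l - 1)).card = l := by
  intro A hA
  have hAspec := Finset.mem_powersetCard.1 (hF hA)
  have hAn : A ⊆ Finset.Icc 1 n := hAspec.1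
  have hAcard : A.card = k := hAspec.2
  -- Step 1: there is l ≥ 1 with l ≤ cnt A (2l-1)
  have H : ∃ l : ℕ, 1 ≤ l ∧ l ≤ cnt A (2 * l - 1) := by
    by_contra hH
    push_neg at hH
    have hbad : ∀ l : ℕ, 1 ≤ l → cnt A (2 * l - 1) ≤ l - 1 := by
      intro l hl
      have := hH l hl
      omega
    have hbound : ∀ m, cnt A m ≤ min (m / 2) k := by
      intro m
      refine le_min ?_ (hAcard ▸ cnt_le_card A m)
      have h1 : cnt A m ≤ cnt A (2 * (m / 2 + 1) - 1) := cnt_mono A (by omega)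
      have h2 := hbad (m / 2 + 1) (by omega)
      omega
    -- the even and odd sets
    set E : Finset ℕ := (Finset.Icc 1 k).image (fun t => 2 * t) with hEdef
    set O : Finset ℕ := (Finset.Icc 1 k).image (fun t => 2 * t - 1) with hOdef
    have hEcard : E.card = k := by
      rw [hEdef, Finset.card_image_of_injOn (by intro a _ b _ h; have h' : 2 * a = 2 * b := h; omega)]
      rw [Nat.card_Icc]; omega
    have hOcard : O.card = k := by
      rw [hOdef, Finset.card_image_of_injOn (by
        intro a ha b hb h
        simp only [Finset.coe_Icc, Set.mem_Icc] at ha hb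
        have h' : 2 * a - 1 = 2 * b - 1 := h
        omega)]
      rw [Nat.card_Icc]; omega
    have hEn : E ⊆ Finset.Icc 1 n := by
      intro x hx
      simp only [hEdef, Finset.mem_image, Finset.mem_Icc] at hx
      obtain ⟨t, ht, rfl⟩ := hx
      simp only [Finset.mem_Icc]
      omega
    have hOn : O ⊆ Finset.Icc 1 n := by
      intro x hx
      simp only [hOdef, Finset.mem_image, Finset.mem_Icc] at hx
      obtain ⟨t, ht, rfl⟩ := hx
      simp only [Finset.mem_Icc]
      omega
    have hEcnt : ∀ m, min (m / 2) k ≤ cnt E m := by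
      intro m
      have hsub : (Finset.Icc 1 (min (m / 2) k)).image (fun t => 2 * t)
          ⊆ E.filter (· ≤ m) := by
        intro x hx
        simp only [Finset.mem_image, Finset.mem_Icc] at hx
        obtain ⟨t, ht, rfl⟩ := hx
        refine Finset.mem_filter.2 ⟨?_, ?_⟩
        · exact Finset.mem_image.2 ⟨t, Finset.mem_Icc.2 ⟨ht.1, le_trans ht.2 (min_le_right _ _)⟩, rfl⟩
        · have : t ≤ m / 2 := le_trans ht.2 (min_le_left _ _)
          omega
      have hcard : ((Finset.Icc 1 (min (m / 2) k)).image (fun t => 2 * t)).card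
          = min (m / 2) k := by
        rw [Finset.card_image_of_injOn (by intro a _ b _ h; have h' : 2 * a = 2 * b := h; omega)]
        rw [Nat.card_Icc]; omega
      calc min (m / 2) k = _ := hcard.symm
        _ ≤ (E.filter (· ≤ m)).card := Finset.card_le_card hsub
        _ = cnt E m := rfl
    have hOcnt : ∀ m, min (m / 2) k ≤ cnt O m := by
      intro m
      have hsub : (Finset.Icc 1 (min (m / 2) k)).image (fun t => 2 * t - 1)
          ⊆ O.filter (· ≤ m) := by
        intro x hx
        simp only [Finset.mem_image, Finset.mem_Icc] at hx
        obtain ⟨t, ht, rfl⟩ := hx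
        refine Finset.mem_filter.2 ⟨?_, ?_⟩
        · exact Finset.mem_image.2 ⟨t, Finset.mem_Icc.2 ⟨ht.1, le_trans ht.2 (min_le_right _ _)⟩, rfl⟩
        · have : t ≤ m / 2 := le_trans ht.2 (min_le_left _ _)
          omega
      have hcard : ((Finset.Icc 1 (min (m / 2) k)).image (fun t => 2 * t - 1)).card
          = min (m / 2) k := by
        rw [Finset.card_image_of_injOn (by
          intro a ha b hb h
          simp only [Finset.coe_Icc, Set.mem_Icc] at ha hb
          have h' : 2 * a - 1 = 2 * b - 1 := h
          omega)]
        rw [Nat.card_Icc]; omega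
      calc min (m / 2) k = _ := hcard.symm
        _ ≤ (O.filter (· ≤ m)).card := Finset.card_le_card hsub
        _ = cnt O m := rfl
    have hEF : E ∈ F :=
      pushdown n F hshift (A.sum id) A hA hAn le_rfl E hEn (by rw [hEcard, hAcard])
        (fun m => le_trans (hbound m) (hEcnt m))
    have hOF : O ∈ F :=
      pushdown n F hshift (A.sum id) A hA hAn le_rfl O hOn (by rw [hOcard, hAcard])
        (fun m => le_trans (hbound m) (hOcnt m))
    obtain ⟨x, hx⟩ := hint E hEF O hOF
    rw [Finset.mem_inter] at hx
    have hx1 := hx.1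
    have hx2 := hx.2
    simp only [hEdef, Finset.mem_image, Finset.mem_Icc] at hx1
    simp only [hOdef, Finset.mem_image, Finset.mem_Icc] at hx2
    obtain ⟨t, ht, rfl⟩ := hx1
    obtain ⟨u, hu, hxu⟩ := hx2
    omega
  -- Step 2: minimal such l gives equality
  classical
  let l := Nat.find H
  have hl1 : 1 ≤ l := (Nat.find_spec H).1
  have hl2 : l ≤ cnt A (2 * l - 1) := (Nat.find_spec H).2
  have hlmin : ∀ l', l' < l → ¬(1 ≤ l' ∧ l' ≤ cnt A (2 * l' - 1)) :=
    fun l' hl' => Nat.find_min H hl'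
  refine ⟨l, hl1, ?_⟩
  rw [inter_Icc_eq_filter hAn]
  show cnt A (2 * l - 1) = l
  refine le_antisymm ?_ hl2
  rcases eq_or_lt_of_le hl1 with h1 | h1
  · -- l = 1
    rw [← h1]
    have : A.filter (· ≤ 2 * 1 - 1) ⊆ {1} := by
      intro x hx
      rw [Finset.mem_filter] at hx
      have := (Finset.mem_Icc.1 (hAn hx.1)).1
      simp only [Finset.mem_singleton]
      omega
    calc cnt A (2 * 1 - 1) ≤ ({1} : Finset ℕ).card := Finset.card_le_card this
      _ = 1 := Finset.card_singleton 1
  · -- l ≥ 2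
    have hprev := hlmin (l - 1) (by omega)
    have hprev' : cnt A (2 * (l - 1) - 1) ≤ l - 2 := by
      rcases Nat.lt_or_ge (cnt A (2 * (l - 1) - 1)) (l - 1) with h | h
      · omega
      · exact absurd ⟨by omega, h⟩ hprev
    have hstep : cnt A (2 * l - 1) ≤ cnt A (2 * (l - 1) - 1) + 2 := by
      have hsub : A.filter (· ≤ 2 * l - 1)
          ⊆ (A.filter (· ≤ 2 * (l - 1) - 1)) ∪ {2 * l - 2, 2 * l - 1} := by
        intro x hx
        rw [Finset.mem_filter] at hx
        rw [Finset.mem_union, Finset.mem_insert, Finset.mem_singleton]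
        by_cases hle : x ≤ 2 * (l - 1) - 1
        · exact Or.inl (Finset.mem_filter.2 ⟨hx.1, hle⟩)
        · right; omega
      calc cnt A (2 * l - 1) ≤ _ := Finset.card_le_card hsub
        _ ≤ (A.filter (· ≤ 2 * (l - 1) - 1)).card + ({2 * l - 2, 2 * l - 1} : Finset ℕ).card :=
            Finset.card_union_le _ _
        _ ≤ cnt A (2 * (l - 1) - 1) + 2 := by
            have hrfl : (A.filter (· ≤ 2 * (l - 1) - 1)).card = cnt A (2 * (l - 1) - 1) := rfl
            have hcard2 : ({2 * l - 2, 2 * l - 1} : Finset ℕ).card ≤ 2 :=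
              le_trans (Finset.card_insert_le _ _) (by simp)
            omega
    omega

end Halving


/-- If `n ≥ 2k > 0` and `F` is a shifted intersecting family of `k`-element subsets
of `[n] = {1, ..., n}`, then every member `A` of `F` satisfies
`|A ∩ [2l-1]| = l` for some integer `l ≥ 1`. -/
theorem shifted_intersecting_halving (n k : ℕ) (hk : 0 < k) (hnk : 2 * k ≤ n)
    (F : Finset (Finset ℕ))
    (hF : F ⊆ (Finset.Icc 1 n).powersetCard k)
    (hint : ∀ A ∈ F, ∀ B ∈ F, (A ∩ B).Nonempty)
    (hshift : ∀ i j, 1 ≤ i → i < j → j ≤ n → shiftFam i j F = F) :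
    ∀ A ∈ F, ∃ l : ℕ, 1 ≤ l ∧ (A ∩ Finset.Icc 1 (2 * l - 1)).card = l :=
  Halving.main_aux n k hk hnk F hF hint hshift
end

section
/- Let n ≥ 2k > 0, let 1 ≤ l ≤ k, and let S ⊆ [2l] with |S| = l. Define A = {A ∈ C([n],k) : A ∩ [2l] = S} and B = {B ∈ C([n],k) : B ∩ [2l] = [2l] \ S}. Then |A| = |B| = C(n−2l, k−l), and for any cross-intersecting pair of subfamilies A' ⊆ A and B' ⊆ B one has |A'| + |B'| ≤ C(n−2l, k−l). -/
open Finset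

-- double counting key lemma
lemma cross_key (G : Finset ℕ) (κ : ℕ) (h : 2 * κ ≤ G.card)
    (T₁ T₂ : Finset (Finset ℕ)) (h1 : T₁ ⊆ G.powersetCard κ)
    (h2 : T₂ ⊆ G.powersetCard κ)
    (hcross : ∀ T ∈ T₁, ∀ T' ∈ T₂, ¬ Disjoint T T') :
    T₁.card + T₂.card ≤ G.card.choose κ := by
  set P := G.powersetCard κ with hP
  set d := (G.card - κ).choose κ with hd
  have hdpos : 0 < d := Nat.choose_pos (by omega)
  have hfil : ∀ T ∈ P, P.filter (fun T' => Disjoint T T') = (G \ T).powersetCard κ := by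
    intro T hT
    rw [mem_powersetCard] at hT
    ext T'
    simp only [hP, mem_filter, mem_powersetCard, subset_sdiff]
    constructor
    · rintro ⟨⟨hs, hc⟩, hdis⟩; exact ⟨⟨hs, hdis.symm⟩, hc⟩
    · rintro ⟨⟨hs, hdis⟩, hc⟩; exact ⟨⟨hs, hc⟩, hdis.symm⟩
  have hcardfil : ∀ T ∈ P, (P.filter (fun T' => Disjoint T T')).card = d := by
    intro T hT
    rw [hfil T hT, card_powersetCard, card_sdiff_of_subset (mem_powersetCard.mp hT).1,
      (mem_powersetCard.mp hT).2]
  have key := Finset.card_mul_le_card_mul (fun T T' => Disjoint T T')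
    (s := T₁) (t := P \ T₂) (m := d) (n := d) ?_ ?_
  · have hsub : T₂ ⊆ P := h2
    have : (P \ T₂).card = P.card - T₂.card := card_sdiff_of_subset hsub
    have hT1 : T₁.card ≤ (P \ T₂).card := Nat.le_of_mul_le_mul_right
      (by simpa [mul_comm] using key) hdpos
    have hPcard : P.card = G.card.choose κ := card_powersetCard κ G
    have hT2P : T₂.card ≤ P.card := card_le_card hsub
    omega
  · intro T hT
    have hTP : T ∈ P := h1 hT
    have : (P \ T₂).bipartiteAbove (fun T T' => Disjoint T T') T
        = P.filter (fun T' => Disjoint T T') := by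
      unfold Finset.bipartiteAbove
      ext T'
      simp only [mem_filter, mem_sdiff]
      constructor
      · rintro ⟨⟨hp, _⟩, hdis⟩; exact ⟨hp, hdis⟩
      · rintro ⟨hp, hdis⟩
        refine ⟨⟨hp, fun hmem => ?_⟩, hdis⟩
        exact hcross T hT T' hmem hdis
    rw [this, hcardfil T hTP]
  · intro T' hT'
    have hT'P : T' ∈ P := (mem_sdiff.mp hT').1
    have hsub : T₁.bipartiteBelow (fun T T' => Disjoint T T') T'
        ⊆ P.filter (fun T => Disjoint T' T) := by
      intro T hT
      unfold Finset.bipartiteBelow at hT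
      rw [mem_filter] at hT ⊢
      exact ⟨h1 hT.1, hT.2.symm⟩
    calc (T₁.bipartiteBelow (fun T T' => Disjoint T T') T').card
        ≤ (P.filter (fun T => Disjoint T' T)).card := card_le_card hsub
      _ = d := hcardfil T' hT'P

-- bijection lemma: the family {A ∈ C([n],k) : A ∩ [2l] = S₀} maps bijectively
-- onto κ-subsets of Icc (2l+1) n via A ↦ A \ Icc 1 (2l)
lemma family_image (n k l : ℕ) (hlk : l ≤ k) (h2l : 2 * l ≤ n)
    (S₀ : Finset ℕ) (hS₀ : S₀ ⊆ Finset.Icc 1 (2 * l)) (hc : S₀.card = l) :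
    (((Finset.Icc 1 n).powersetCard k).filter
        (fun A => A ∩ Finset.Icc 1 (2 * l) = S₀)).image
      (fun A => A \ Finset.Icc 1 (2 * l))
      = (Finset.Icc (2 * l + 1) n).powersetCard (k - l) ∧
    Set.InjOn (fun A => A \ Finset.Icc 1 (2 * l))
      (((Finset.Icc 1 n).powersetCard k).filter
        (fun A => A ∩ Finset.Icc 1 (2 * l) = S₀) : Set (Finset ℕ)) := by
  have hrec : ∀ A : Finset ℕ, A ∩ Finset.Icc 1 (2 * l) = S₀ →
      A = S₀ ∪ (A \ Finset.Icc 1 (2 * l)) := by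
    intro A hA
    rw [← hA]
    ext x
    simp only [mem_union, mem_inter, mem_sdiff]
    tauto
  constructor
  · ext T
    simp only [mem_image, mem_filter, mem_powersetCard]
    constructor
    · rintro ⟨A, ⟨⟨hAsub, hAcard⟩, hAint⟩, rfl⟩
      constructor
      · intro x hx
        rw [mem_sdiff] at hx
        have hx1 := hAsub hx.1
        have hx2 := hx.2
        simp only [mem_Icc] at hx1 hx2 ⊢
        omega
      · have : (A ∩ Finset.Icc 1 (2 * l)).card + (A \ Finset.Icc 1 (2 * l)).card
            = A.card := Finset.card_inter_add_card_sdiff A _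
        rw [hAint, hc, hAcard] at this
        omega
    · rintro ⟨hTsub, hTcard⟩
      have hTdis : Disjoint T (Finset.Icc 1 (2 * l)) := by
        rw [Finset.disjoint_left]
        intro x hx hx2
        have := hTsub hx
        rw [mem_Icc] at this hx2
        omega
      refine ⟨S₀ ∪ T, ⟨⟨?_, ?_⟩, ?_⟩, ?_⟩
      · intro x hx
        rw [mem_union] at hx
        rcases hx with hx | hx
        · have := hS₀ hx; rw [mem_Icc] at *; omega
        · have := hTsub hx; rw [mem_Icc] at *; omega
      · rw [card_union_of_disjoint, hc, hTcard]
        · omega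
        · exact (hTdis.mono_right hS₀).symm
      · rw [union_inter_distrib_right, inter_eq_left.mpr hS₀,
          (Finset.disjoint_iff_inter_eq_empty.mp hTdis), union_empty]
      · rw [union_sdiff_distrib, sdiff_eq_empty_iff_subset.mpr hS₀, empty_union,
          sdiff_eq_self_of_disjoint hTdis]
  · intro A hA B hB hEq
    simp only [coe_filter, Set.mem_setOf_eq] at hA hB
    rw [hrec A hA.2, hrec B hB.2]
    simp only at hEq
    rw [hEq]

/-- Let `n ≥ 2k > 0`, `1 ≤ l ≤ k`, and `S ⊆ [2l]` with `|S| = l`. For the families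
`𝒜 = {A ∈ C([n],k) : A ∩ [2l] = S}` and `ℬ = {B ∈ C([n],k) : B ∩ [2l] = [2l] \ S}`,
one has `|𝒜| = |ℬ| = C(n-2l, k-l)`, and any cross-intersecting pair of subfamilies
`A' ⊆ 𝒜`, `B' ⊆ ℬ` satisfies `|A'| + |B'| ≤ C(n-2l, k-l)`. -/
theorem regular_bipartite_bound (n k l : ℕ) (hk : 0 < k) (hnk : 2 * k ≤ n)
    (hl : 1 ≤ l) (hlk : l ≤ k)
    (S : Finset ℕ) (hS : S ⊆ Finset.Icc 1 (2 * l)) (hScard : S.card = l)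
    (𝒜 ℬ : Finset (Finset ℕ))
    (h𝒜 : 𝒜 = ((Finset.Icc 1 n).powersetCard k).filter
      (fun A => A ∩ Finset.Icc 1 (2 * l) = S))
    (hℬ : ℬ = ((Finset.Icc 1 n).powersetCard k).filter
      (fun B => B ∩ Finset.Icc 1 (2 * l) = Finset.Icc 1 (2 * l) \ S)) :
    𝒜.card = (n - 2 * l).choose (k - l) ∧
    ℬ.card = (n - 2 * l).choose (k - l) ∧
    ∀ A' ⊆ 𝒜, ∀ B' ⊆ ℬ, (∀ A ∈ A', ∀ B ∈ B', (A ∩ B).Nonempty) →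
      A'.card + B'.card ≤ (n - 2 * l).choose (k - l) := by
  have h2l : 2 * l ≤ n := by omega
  have hGcard : (Finset.Icc (2 * l + 1) n).card = n - 2 * l := by
    rw [Nat.card_Icc]; omega
  have hS' : Finset.Icc 1 (2 * l) \ S ⊆ Finset.Icc 1 (2 * l) := sdiff_subset
  have hS'card : (Finset.Icc 1 (2 * l) \ S).card = l := by
    rw [card_sdiff_of_subset hS, Nat.card_Icc, hScard]; omega
  obtain ⟨himA, hinjA⟩ := family_image n k l hlk h2l S hS hScard
  obtain ⟨himB, hinjB⟩ := family_image n k l hlk h2l _ hS' hS'card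
  rw [← h𝒜] at himA hinjA
  rw [← hℬ] at himB hinjB
  have hcard𝒜 : 𝒜.card = (n - 2 * l).choose (k - l) := by
    rw [← Finset.card_image_of_injOn hinjA, himA, card_powersetCard, hGcard]
  have hcardℬ : ℬ.card = (n - 2 * l).choose (k - l) := by
    rw [← Finset.card_image_of_injOn hinjB, himB, card_powersetCard, hGcard]
  refine ⟨hcard𝒜, hcardℬ, ?_⟩
  intro A' hA' B' hB' hcross
  set f : Finset ℕ → Finset ℕ := fun A => A \ Finset.Icc 1 (2 * l) with hf
  have hinjA' : Set.InjOn f (A' : Set (Finset ℕ)) :=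
    hinjA.mono (by exact_mod_cast hA')
  have hinjB' : Set.InjOn f (B' : Set (Finset ℕ)) :=
    hinjB.mono (by exact_mod_cast hB')
  have hc1 : (A'.image f).card = A'.card := Finset.card_image_of_injOn hinjA'
  have hc2 : (B'.image f).card = B'.card := Finset.card_image_of_injOn hinjB'
  have hsub1 : A'.image f ⊆ (Finset.Icc (2 * l + 1) n).powersetCard (k - l) := by
    rw [← himA]; exact Finset.image_subset_image hA'
  have hsub2 : B'.image f ⊆ (Finset.Icc (2 * l + 1) n).powersetCard (k - l) := by
    rw [← himB]; exact Finset.image_subset_image hB'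
  have hcross' : ∀ T ∈ A'.image f, ∀ T' ∈ B'.image f, ¬ Disjoint T T' := by
    intro T hT T' hT'
    rw [mem_image] at hT hT'
    obtain ⟨A, hA, rfl⟩ := hT
    obtain ⟨B, hB, rfl⟩ := hT'
    obtain ⟨x, hx⟩ := hcross A hA B hB
    rw [mem_inter] at hx
    have hAmem := hA' hA
    have hBmem := hB' hB
    rw [h𝒜, mem_filter] at hAmem
    rw [hℬ, mem_filter] at hBmem
    rw [Finset.not_disjoint_iff]
    refine ⟨x, ?_, ?_⟩ <;> rw [hf, mem_sdiff] <;>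
      refine ⟨by tauto, fun hxI => ?_⟩
    · have hxS : x ∈ S := by rw [← hAmem.2, mem_inter]; exact ⟨hx.1, hxI⟩
      have hxS' : x ∈ Finset.Icc 1 (2 * l) \ S := by
        rw [← hBmem.2, mem_inter]; exact ⟨hx.2, hxI⟩
      rw [mem_sdiff] at hxS'
      exact hxS'.2 hxS
    · have hxS : x ∈ S := by rw [← hAmem.2, mem_inter]; exact ⟨hx.1, hxI⟩
      have hxS' : x ∈ Finset.Icc 1 (2 * l) \ S := by
        rw [← hBmem.2, mem_inter]; exact ⟨hx.2, hxI⟩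
      rw [mem_sdiff] at hxS'
      exact hxS'.2 hxS
  have := cross_key (Finset.Icc (2 * l + 1) n) (k - l)
    (by rw [hGcard]; omega) (A'.image f) (B'.image f) hsub1 hsub2 hcross'
  rw [hc1, hc2, hGcard] at this
  exact this
end

section
/- Let n > 2k > 0 and let F ⊆ C([n],k) be a nontrivially intersecting shifted family. Let F ∈ F be a member of maximal order, let l ≥ 1 be the largest integer with |F ∩ [2l−1]| = l, and set L = [2l] \ F. Define A = {A ∈ C([n],k) : A ∩ [2l] = F ∩ [2l]} and B = {B ∈ C([n],k) : B ∩ [2l] = L}, and let F' = (F \ A) ∪ B. Then F' is intersecting, the order of F' is strictly smaller than the order of F, and |F'| ≥ |F|. -/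
/-- `A` lexicographically precedes `B` if the smallest element of `A \ B`
is smaller than the smallest element of `B \ A`. -/
def lexLt (A B : Finset ℕ) : Prop := (A \ B).min < (B \ A).min

instance : DecidableRel lexLt := fun _ _ => inferInstanceAs (Decidable (_ < _))

/-- The order of a `k`-element subset of `[n]`: its position in the lexicographic
order on `C([n],k)`, i.e. the number of `k`-element subsets of `[n]` strictly
preceding it. -/
def setOrder (n k : ℕ) (A : Finset ℕ) : ℕ :=
  (((Finset.Icc 1 n).powersetCard k).filter (fun C => lexLt C A)).card

/-- The order of a family: the maximal order of its members. -/
def famOrder (n k : ℕ) (F : Finset (Finset ℕ)) : ℕ := F.sup (setOrder n k)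

lemma lexLt_of_bounds {A B : Finset ℕ} {a b : ℕ} (ha : a ∈ A \ B)
    (hb : ∀ y ∈ B \ A, b ≤ y) (hab : a < b) : lexLt A B := by
  have h1 : (A \ B).min ≤ (a : WithTop ℕ) := Finset.min_le ha
  have h2 := Finset.le_min (s := B \ A) (fun y hy => (WithTop.coe_le_coe.mpr (hb y hy)))
  exact lt_of_le_of_lt h1 (lt_of_lt_of_le (WithTop.coe_lt_coe.mpr hab) h2)

lemma lexLt_iff {A B : Finset ℕ} :
    lexLt A B ↔ ∃ a, a ∈ A ∧ a ∉ B ∧ ∀ x < a, (x ∈ A ↔ x ∈ B) := by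
  constructor
  · intro h
    have h' : (A \ B).min < (B \ A).min := h
    have hne : (A \ B).min ≠ ⊤ := fun ht => by
      rw [ht] at h'; exact (not_top_lt h')
    obtain ⟨a, ha⟩ := WithTop.ne_top_iff_exists.mp hne
    have hmem : a ∈ A \ B := Finset.mem_of_min ha.symm
    refine ⟨a, (Finset.mem_sdiff.mp hmem).1, (Finset.mem_sdiff.mp hmem).2, ?_⟩
    intro x hx
    constructor
    · intro hxA
      by_contra hxB
      have h4 : (A \ B).min ≤ (x : WithTop ℕ) := Finset.min_le (Finset.mem_sdiff.mpr ⟨hxA, hxB⟩)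
      rw [← ha] at h4
      exact absurd (WithTop.coe_le_coe.mp h4) (not_le.mpr hx)
    · intro hxB
      by_contra hxA
      have h2 : (B \ A).min ≤ (x : WithTop ℕ) := Finset.min_le (Finset.mem_sdiff.mpr ⟨hxB, hxA⟩)
      rw [← ha] at h'
      exact absurd (WithTop.coe_lt_coe.mp (lt_of_lt_of_le h' h2)) (not_lt.mpr (le_of_lt hx))
  · rintro ⟨a, haA, haB, hfirst⟩
    refine lexLt_of_bounds (Finset.mem_sdiff.mpr ⟨haA, haB⟩) ?_ (Nat.lt_succ_self a)
    intro y hy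
    obtain ⟨hyB, hyA⟩ := Finset.mem_sdiff.mp hy
    rcases lt_trichotomy y a with h | h | h
    · exact absurd ((hfirst y h).mpr hyB) hyA
    · exact absurd (h ▸ hyB) haB
    · omega

lemma lexLt_trans {A B C : Finset ℕ} (h1 : lexLt A B) (h2 : lexLt B C) : lexLt A C := by
  obtain ⟨a, haA, haB, hfa⟩ := lexLt_iff.mp h1
  obtain ⟨b, hbB, hbC, hfb⟩ := lexLt_iff.mp h2
  rcases lt_trichotomy a b with h | h | h
  · refine lexLt_iff.mpr ⟨a, haA, ?_, ?_⟩
    · intro haC; exact haB ((hfb a h).mpr haC)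
    · intro x hx; exact (hfa x hx).trans (hfb x (hx.trans h))
  · exact absurd (h ▸ hbB) haB
  · refine lexLt_iff.mpr ⟨b, (hfa b h).mpr hbB, hbC, ?_⟩
    intro x hx; exact (hfa x (hx.trans h)).trans (hfb x hx)

lemma lexLt_irrefl (A : Finset ℕ) : ¬ lexLt A A := by
  unfold lexLt; simp

lemma lexLt_or {A B : Finset ℕ} (hne : A ≠ B) (hcard : A.card = B.card) :
    lexLt A B ∨ lexLt B A := by
  have hAB : (A \ B).Nonempty := by
    rw [Finset.sdiff_nonempty]
    intro hsub
    exact hne (Finset.eq_of_subset_of_card_le hsub (le_of_eq hcard.symm))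
  have hBA : (B \ A).Nonempty := by
    rw [Finset.sdiff_nonempty]
    intro hsub
    exact hne (Finset.eq_of_subset_of_card_le hsub (le_of_eq hcard)).symm
  have haM : (A \ B).min' hAB ∈ A \ B := Finset.min'_mem _ _
  have hbM : (B \ A).min' hBA ∈ B \ A := Finset.min'_mem _ _
  have hne2 : (A \ B).min' hAB ≠ (B \ A).min' hBA := by
    intro h
    have h1 := (Finset.mem_sdiff.mp haM).1
    rw [h] at h1
    exact (Finset.mem_sdiff.mp hbM).2 h1
  rcases lt_or_gt_of_ne hne2 with h | h
  · exact Or.inl (lexLt_of_bounds haM (fun y hy => Finset.min'_le _ _ hy) h)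
  · exact Or.inr (lexLt_of_bounds hbM (fun y hy => Finset.min'_le _ _ hy) h)

lemma setOrder_lt_of_lexLt {n k : ℕ} {A B : Finset ℕ}
    (hA : A ∈ (Finset.Icc 1 n).powersetCard k) (h : lexLt A B) :
    setOrder n k A < setOrder n k B := by
  unfold setOrder
  apply Finset.card_lt_card
  constructor
  · intro C hC
    obtain ⟨hC1, hC2⟩ := Finset.mem_filter.mp hC
    exact Finset.mem_filter.mpr ⟨hC1, lexLt_trans hC2 h⟩
  · intro hcontra
    have : A ∈ ((Finset.Icc 1 n).powersetCard k).filter (fun C => lexLt C A) :=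
      hcontra (Finset.mem_filter.mpr ⟨hA, h⟩)
    exact lexLt_irrefl A (Finset.mem_filter.mp this).2

lemma cross_count (U : Finset ℕ) (r : ℕ) (hU : 2 * r ≤ U.card)
    (XA XB : Finset (Finset ℕ))
    (hXA : XA ⊆ U.powersetCard r) (hXB : XB ⊆ U.powersetCard r)
    (cross : ∀ X ∈ XA, ∀ Y ∈ XB, (X ∩ Y).Nonempty) :
    XA.card + XB.card ≤ (U.powersetCard r).card := by
  classical
  set P := U.powersetCard r with hP
  set I := XA ∩ XB with hI
  set W := P \ (XA ∪ XB) with hW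
  set d := (U.card - r).choose r with hd
  have hmemP : ∀ S ∈ P, S ⊆ U ∧ S.card = r := by
    intro S hS; exact Finset.mem_powersetCard.mp hS
  have hdcard : ∀ S ∈ P, ((U \ S).powersetCard r).card = d := by
    intro S hS
    rw [Finset.card_powersetCard, Finset.card_sdiff_of_subset (hmemP S hS).1, (hmemP S hS).2]
  have e1 : ∀ A ∈ I, d ≤ (W.filter (fun Y => A ∩ Y = ∅)).card := by
    intro A hA
    have hAXA : A ∈ XA := (Finset.mem_inter.mp hA).1
    have hAXB : A ∈ XB := (Finset.mem_inter.mp hA).2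
    have hAP : A ∈ P := hXA hAXA
    rw [← hdcard A hAP]
    apply Finset.card_le_card
    intro Y hY
    obtain ⟨hYsub, hYcard⟩ := Finset.mem_powersetCard.mp hY
    have hYU : Y ⊆ U := hYsub.trans (Finset.sdiff_subset)
    have hYP : Y ∈ P := Finset.mem_powersetCard.mpr ⟨hYU, hYcard⟩
    have hdisj : A ∩ Y = ∅ := by
      rw [Finset.inter_comm]
      exact Finset.disjoint_iff_inter_eq_empty.mp
        (Finset.disjoint_of_subset_left hYsub Finset.sdiff_disjoint)
    refine Finset.mem_filter.mpr ⟨Finset.mem_sdiff.mpr ⟨hYP, ?_⟩, hdisj⟩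
    intro hYin
    rcases Finset.mem_union.mp hYin with hYA | hYB
    · obtain ⟨z, hz⟩ := cross Y hYA A hAXB
      rw [Finset.mem_inter] at hz
      exact absurd (Finset.mem_inter.mpr ⟨hz.2, hz.1⟩)
        (by rw [hdisj]; exact Finset.notMem_empty z)
    · obtain ⟨z, hz⟩ := cross A hAXA Y hYB
      exact absurd hz (by rw [hdisj]; exact Finset.notMem_empty z)
  have e2 : ∀ Y ∈ W, (I.filter (fun A => A ∩ Y = ∅)).card ≤ d := by
    intro Y hY
    have hYP : Y ∈ P := (Finset.mem_sdiff.mp hY).1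
    rw [← hdcard Y hYP]
    apply Finset.card_le_card
    intro A hA
    obtain ⟨hAI, hAd⟩ := Finset.mem_filter.mp hA
    have hAP : A ∈ P := hXA (Finset.mem_inter.mp hAI).1
    refine Finset.mem_powersetCard.mpr ⟨?_, (hmemP A hAP).2⟩
    rw [Finset.subset_sdiff]
    exact ⟨(hmemP A hAP).1, Finset.disjoint_iff_inter_eq_empty.mpr hAd⟩
  have hIW : I.card ≤ W.card := by
    have hdpos : 0 < d := Nat.choose_pos (by omega)
    have key : d * I.card ≤ d * W.card := by
      calc d * I.card = ∑ _A ∈ I, d := by rw [Finset.sum_const, smul_eq_mul, mul_comm]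
      _ ≤ ∑ A ∈ I, (W.filter (fun Y => A ∩ Y = ∅)).card := Finset.sum_le_sum e1
      _ = ∑ A ∈ I, ∑ Y ∈ W, (if A ∩ Y = ∅ then 1 else 0) := by
          refine Finset.sum_congr rfl (fun A _ => ?_)
          rw [Finset.card_filter]
      _ = ∑ Y ∈ W, ∑ A ∈ I, (if A ∩ Y = ∅ then 1 else 0) := Finset.sum_comm
      _ = ∑ Y ∈ W, (I.filter (fun A => A ∩ Y = ∅)).card := by
          refine Finset.sum_congr rfl (fun Y _ => ?_)
          rw [Finset.card_filter]
      _ ≤ ∑ _Y ∈ W, d := Finset.sum_le_sum e2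
      _ = d * W.card := by rw [Finset.sum_const, smul_eq_mul, mul_comm]
    exact Nat.le_of_mul_le_mul_left key hdpos
  have hu1 : XA.card + XB.card = (XA ∪ XB).card + I.card :=
    (Finset.card_union_add_card_inter XA XB).symm
  have hsub : XA ∪ XB ⊆ P := Finset.union_subset hXA hXB
  have hu2 : W.card + (XA ∪ XB).card = P.card := by
    rw [hW]
    exact Finset.card_sdiff_add_card_eq_card hsub
  omega


/-- Key lemma: let `n > 2k > 0` and let `F` be a nontrivially intersecting shifted
family of `k`-element subsets of `[n]`. Let `F₀ ∈ F` have maximal order, let `l ≥ 1`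
be the largest integer with `|F₀ ∩ [2l-1]| = l`, and set `L = [2l] \ F₀`.
With `𝒜 = {A ∈ C([n],k) : A ∩ [2l] = F₀ ∩ [2l]}`, `ℬ = {B ∈ C([n],k) : B ∩ [2l] = L}`
and `F' = (F \ 𝒜) ∪ ℬ`, the family `F'` is intersecting, has strictly smaller order
than `F`, and `|F'| ≥ |F|`. -/
theorem key_lemma (n k : ℕ) (hk : 0 < k) (hnk : 2 * k < n)
    (F : Finset (Finset ℕ))
    (hF : F ⊆ (Finset.Icc 1 n).powersetCard k)
    (hint : ∀ A ∈ F, ∀ B ∈ F, (A ∩ B).Nonempty)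
    (hnontriv : ¬ ∃ x, ∀ A ∈ F, x ∈ A)
    (hshift : ∀ i j, 1 ≤ i → i < j → j ≤ n → shiftFam i j F = F)
    (F₀ : Finset ℕ) (hF₀ : F₀ ∈ F)
    (hmax : ∀ G ∈ F, setOrder n k G ≤ setOrder n k F₀)
    (l : ℕ) (hl : 1 ≤ l) (hlcard : (F₀ ∩ Finset.Icc 1 (2 * l - 1)).card = l)
    (hlmax : ∀ m : ℕ, 1 ≤ m → (F₀ ∩ Finset.Icc 1 (2 * m - 1)).card = m → m ≤ l)
    (L : Finset ℕ) (hL : L = Finset.Icc 1 (2 * l) \ F₀)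
    (𝒜 ℬ F' : Finset (Finset ℕ))
    (h𝒜 : 𝒜 = ((Finset.Icc 1 n).powersetCard k).filter
      (fun A => A ∩ Finset.Icc 1 (2 * l) = F₀ ∩ Finset.Icc 1 (2 * l)))
    (hℬ : ℬ = ((Finset.Icc 1 n).powersetCard k).filter
      (fun B => B ∩ Finset.Icc 1 (2 * l) = L))
    (hF' : F' = (F \ 𝒜) ∪ ℬ) :
    (∀ A ∈ F', ∀ B ∈ F', (A ∩ B).Nonempty) ∧
    famOrder n k F' < famOrder n k F ∧
    F.card ≤ F'.card := by
  classical
  have hmemg : ∀ G ∈ F, G ⊆ Finset.Icc 1 n ∧ G.card = k :=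
    fun G hG => Finset.mem_powersetCard.mp (hF hG)
  have hF₀g := hF hF₀
  have hF₀sub : F₀ ⊆ Finset.Icc 1 n := (hmemg F₀ hF₀).1
  have hF₀card : F₀.card = k := (hmemg F₀ hF₀).2
  have hmemA : ∀ {S : Finset ℕ}, S ∈ 𝒜 ↔
      S ∈ (Finset.Icc 1 n).powersetCard k ∧
      S ∩ Finset.Icc 1 (2 * l) = F₀ ∩ Finset.Icc 1 (2 * l) := by
    intro S; rw [h𝒜]; exact Finset.mem_filter
  have hmemB : ∀ {S : Finset ℕ}, S ∈ ℬ ↔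
      S ∈ (Finset.Icc 1 n).powersetCard k ∧
      S ∩ Finset.Icc 1 (2 * l) = L := by
    intro S; rw [hℬ]; exact Finset.mem_filter
  have hmemF' : ∀ {S : Finset ℕ}, S ∈ F' ↔ (S ∈ F ∧ S ∉ 𝒜) ∨ S ∈ ℬ := by
    intro S; rw [hF']
    simp [Finset.mem_union, Finset.mem_sdiff]
  have notLex : ∀ G ∈ F, ¬ lexLt F₀ G := by
    intro G hG hlex
    exact absurd (hmax G hG) (not_le.mpr (setOrder_lt_of_lexLt hF₀g hlex))
  have h1F₀ : 1 ∉ F₀ := by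
    intro h1
    refine hnontriv ⟨1, fun G hG => ?_⟩
    by_contra h1G
    refine notLex G hG (lexLt_of_bounds (a := 1) (b := 2)
      (Finset.mem_sdiff.mpr ⟨h1, h1G⟩) ?_ one_lt_two)
    intro y hy
    obtain ⟨hyG, _⟩ := Finset.mem_sdiff.mp hy
    have hy1 : 1 ≤ y := (Finset.mem_Icc.mp ((hmemg G hG).1 hyG)).1
    have hyne : y ≠ 1 := fun h => h1G (h ▸ hyG)
    omega
  have hlk : l ≤ k := by
    have h := Finset.card_le_card
      (Finset.inter_subset_left (s₁ := F₀) (s₂ := Finset.Icc 1 (2 * l - 1)))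
    rw [hlcard, hF₀card] at h
    exact h
  have h2lF₀ : 2 * l ∉ F₀ := by
    intro h2l
    have hcmono : ∀ m m' : ℕ, m ≤ m' →
        (F₀ ∩ Finset.Icc 1 (2 * m - 1)).card ≤ (F₀ ∩ Finset.Icc 1 (2 * m' - 1)).card := by
      intro m m' hmm
      exact Finset.card_le_card (Finset.inter_subset_inter (Finset.Subset.refl _)
        (Finset.Icc_subset_Icc le_rfl (by omega)))
    have hstart : l + 1 ≤ (F₀ ∩ Finset.Icc 1 (2 * (l + 1) - 1)).card := by
      have hins : insert (2 * l) (F₀ ∩ Finset.Icc 1 (2 * l - 1)) ⊆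
          F₀ ∩ Finset.Icc 1 (2 * (l + 1) - 1) := by
        intro x hx
        rcases Finset.mem_insert.mp hx with h | h
        · subst h; exact Finset.mem_inter.mpr ⟨h2l, Finset.mem_Icc.mpr (by omega)⟩
        · obtain ⟨hx1, hx2⟩ := Finset.mem_inter.mp h
          have := Finset.mem_Icc.mp hx2
          exact Finset.mem_inter.mpr ⟨hx1, Finset.mem_Icc.mpr (by omega)⟩
      have hnm : (2 * l) ∉ F₀ ∩ Finset.Icc 1 (2 * l - 1) := by
        intro hmem
        have := Finset.mem_Icc.mp (Finset.mem_inter.mp hmem).2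
        omega
      have h := Finset.card_le_card hins
      rw [Finset.card_insert_of_notMem hnm, hlcard] at h
      exact h
    have hend : (F₀ ∩ Finset.Icc 1 (2 * (k + 1) - 1)).card ≤ k := by
      have h := Finset.card_le_card
        (Finset.inter_subset_left (s₁ := F₀) (s₂ := Finset.Icc 1 (2 * (k + 1) - 1)))
      rw [hF₀card] at h
      exact h
    set P : ℕ → Prop := fun m => l + 1 ≤ m ∧ m ≤ (F₀ ∩ Finset.Icc 1 (2 * m - 1)).card
      with hPdef
    have hPl : P (l + 1) := ⟨le_rfl, hstart⟩
    have hm₀P : P (Nat.findGreatest P (k + 1)) :=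
      Nat.findGreatest_spec (show l + 1 ≤ k + 1 by omega) hPl
    set m₀ := Nat.findGreatest P (k + 1) with hm₀def
    have hm₀le : m₀ ≤ k + 1 := Nat.findGreatest_le _
    have hm₀ne : m₀ ≠ k + 1 := by
      intro h
      rw [h] at hm₀P
      exact absurd hm₀P.2 (by omega)
    have hnot : ¬ P (m₀ + 1) :=
      Nat.findGreatest_is_greatest (Nat.lt_succ_self m₀) (by omega)
    have hcle : (F₀ ∩ Finset.Icc 1 (2 * (m₀ + 1) - 1)).card ≤ m₀ := by
      by_contra hcon
      exact hnot ⟨by omega, by omega⟩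
    have hceq : (F₀ ∩ Finset.Icc 1 (2 * m₀ - 1)).card = m₀ :=
      le_antisymm (le_trans (hcmono m₀ (m₀ + 1) (by omega)) hcle) hm₀P.2
    have := hlmax m₀ (by omega) hceq
    omega
  have hTeq : F₀ ∩ Finset.Icc 1 (2 * l) = F₀ ∩ Finset.Icc 1 (2 * l - 1) := by
    ext x
    simp only [Finset.mem_inter, Finset.mem_Icc]
    constructor
    · rintro ⟨hx1, hx2, hx3⟩
      have hxne : x ≠ 2 * l := fun h => h2lF₀ (h ▸ hx1)
      exact ⟨hx1, hx2, by omega⟩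
    · rintro ⟨hx1, hx2, hx3⟩
      exact ⟨hx1, hx2, by omega⟩
  have hTcard : (F₀ ∩ Finset.Icc 1 (2 * l)).card = l := by rw [hTeq, hlcard]
  have hLsub : L ⊆ Finset.Icc 1 (2 * l) := by rw [hL]; exact Finset.sdiff_subset
  have hLcard : L.card = l := by
    have h := Finset.card_sdiff_add_card_inter (Finset.Icc 1 (2 * l)) F₀
    rw [Finset.inter_comm, hTcard, Nat.card_Icc] at h
    rw [hL]
    omega
  have h1L : 1 ∈ L := by
    rw [hL]
    exact Finset.mem_sdiff.mpr ⟨Finset.mem_Icc.mpr ⟨le_rfl, by omega⟩, h1F₀⟩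
  -- Key claim: members of F outside 𝒜 meet L
  have hkey : ∀ G ∈ F, G ∉ 𝒜 → (G ∩ L).Nonempty := by
    intro G hG hGnA
    have hne : G ∩ Finset.Icc 1 (2 * l) ≠ F₀ ∩ Finset.Icc 1 (2 * l) :=
      fun h => hGnA (hmemA.mpr ⟨hF hG, h⟩)
    by_contra hcon
    rw [Finset.not_nonempty_iff_eq_empty] at hcon
    rw [hL] at hcon
    have hsub : G ∩ Finset.Icc 1 (2 * l) ⊆ F₀ ∩ Finset.Icc 1 (2 * l) := by
      intro x hx
      obtain ⟨hxG, hxI⟩ := Finset.mem_inter.mp hx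
      have hxF₀ : x ∈ F₀ := by
        by_contra hxF₀
        have hmem : x ∈ G ∩ (Finset.Icc 1 (2 * l) \ F₀) :=
          Finset.mem_inter.mpr ⟨hxG, Finset.mem_sdiff.mpr ⟨hxI, hxF₀⟩⟩
        rw [hcon] at hmem
        exact Finset.notMem_empty x hmem
      exact Finset.mem_inter.mpr ⟨hxF₀, hxI⟩
    obtain ⟨t, ht⟩ : ((F₀ ∩ Finset.Icc 1 (2 * l)) \ (G ∩ Finset.Icc 1 (2 * l))).Nonempty := by
      rw [Finset.sdiff_nonempty]
      intro h
      exact hne (Finset.Subset.antisymm hsub h)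
    obtain ⟨ht1, ht2⟩ := Finset.mem_sdiff.mp ht
    obtain ⟨htF₀, htI⟩ := Finset.mem_inter.mp ht1
    have htG : t ∉ G := fun h => ht2 (Finset.mem_inter.mpr ⟨h, htI⟩)
    have htle : t ≤ 2 * l := (Finset.mem_Icc.mp htI).2
    refine notLex G hG (lexLt_of_bounds (a := t) (b := 2 * l + 1)
      (Finset.mem_sdiff.mpr ⟨htF₀, htG⟩) ?_ (by omega))
    intro y hy
    obtain ⟨hyG, hyF₀⟩ := Finset.mem_sdiff.mp hy
    by_contra hylt
    push_neg at hylt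
    have hy1 : 1 ≤ y := (Finset.mem_Icc.mp ((hmemg G hG).1 hyG)).1
    have hyI : y ∈ G ∩ Finset.Icc 1 (2 * l) :=
      Finset.mem_inter.mpr ⟨hyG, Finset.mem_Icc.mpr ⟨hy1, by omega⟩⟩
    exact hyF₀ (Finset.mem_inter.mp (hsub hyI)).1
  -- Part 1 : F' is intersecting
  have hLB : ∀ B ∈ ℬ, L ⊆ B := by
    intro B hB x hx
    have hBI := (hmemB.mp hB).2
    rw [← hBI] at hx
    exact (Finset.mem_inter.mp hx).1
  have part1 : ∀ A ∈ F', ∀ B ∈ F', (A ∩ B).Nonempty := by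
    intro A hA B hB
    rcases hmemF'.mp hA with ⟨hAF, hAnA⟩ | hAB
    · rcases hmemF'.mp hB with ⟨hBF, hBnA⟩ | hBB
      · exact hint A hAF B hBF
      · obtain ⟨x, hx⟩ := hkey A hAF hAnA
        obtain ⟨hxA, hxL⟩ := Finset.mem_inter.mp hx
        exact ⟨x, Finset.mem_inter.mpr ⟨hxA, hLB B hBB hxL⟩⟩
    · rcases hmemF'.mp hB with ⟨hBF, hBnA⟩ | hBB
      · obtain ⟨x, hx⟩ := hkey B hBF hBnA
        obtain ⟨hxB, hxL⟩ := Finset.mem_inter.mp hx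
        exact ⟨x, Finset.mem_inter.mpr ⟨hLB A hAB hxL, hxB⟩⟩
      · exact ⟨1, Finset.mem_inter.mpr ⟨hLB A hAB h1L, hLB B hBB h1L⟩⟩
  -- Part 2 : order decreases
  have hordF : famOrder n k F = setOrder n k F₀ :=
    le_antisymm (Finset.sup_le hmax) (Finset.le_sup hF₀)
  have hpos : 0 < setOrder n k F₀ := by
    unfold setOrder
    apply Finset.card_pos.mpr
    refine ⟨Finset.Icc 1 k, Finset.mem_filter.mpr ⟨?_, ?_⟩⟩
    · refine Finset.mem_powersetCard.mpr ⟨Finset.Icc_subset_Icc le_rfl (by omega), ?_⟩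
      rw [Nat.card_Icc]
      omega
    · refine lexLt_of_bounds (a := 1) (b := 2)
        (Finset.mem_sdiff.mpr ⟨Finset.mem_Icc.mpr ⟨le_rfl, hk⟩, h1F₀⟩) ?_ one_lt_two
      intro y hy
      obtain ⟨hyF₀, _⟩ := Finset.mem_sdiff.mp hy
      have hy1 : 1 ≤ y := (Finset.mem_Icc.mp (hF₀sub hyF₀)).1
      have hyne : y ≠ 1 := fun h => h1F₀ (h ▸ hyF₀)
      omega
  have part2 : famOrder n k F' < famOrder n k F := by
    rw [hordF]
    show F'.sup (setOrder n k) < setOrder n k F₀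
    rw [Finset.sup_lt_iff (by simpa using hpos)]
    intro G hG
    rcases hmemF'.mp hG with ⟨hGF, hGnA⟩ | hGB
    · have hGne : G ≠ F₀ := fun h => hGnA (h ▸ (hmemA.mpr ⟨hF₀g, rfl⟩))
      rcases lexLt_or hGne ((hmemg G hGF).2.trans hF₀card.symm) with hlex | hlex
      · exact setOrder_lt_of_lexLt (hF hGF) hlex
      · exact absurd hlex (notLex G hGF)
    · have hGg := (hmemB.mp hGB).1
      have h1G : 1 ∈ G := hLB G hGB h1L
      apply setOrder_lt_of_lexLt hGg
      refine lexLt_of_bounds (a := 1) (b := 2)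
        (Finset.mem_sdiff.mpr ⟨h1G, h1F₀⟩) ?_ one_lt_two
      intro y hy
      obtain ⟨hyF₀, _⟩ := Finset.mem_sdiff.mp hy
      have hy1 : 1 ≤ y := (Finset.mem_Icc.mp (hF₀sub hyF₀)).1
      have hyne : y ≠ 1 := fun h => h1F₀ (h ▸ hyF₀)
      omega
  -- Part 3 : cardinality
  have part3 : F.card ≤ F'.card := by
    set U := Finset.Icc (2 * l + 1) n with hU
    set r := k - l with hr
    have hUcard : U.card = n - 2 * l := by rw [hU, Nat.card_Icc]; omega
    have htail : ∀ {M : Finset ℕ}, M ⊆ Finset.Icc 1 n →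
        M \ Finset.Icc 1 (2 * l) ⊆ U := by
      intro M hM x hx
      obtain ⟨hxM, hxI⟩ := Finset.mem_sdiff.mp hx
      have h1 := Finset.mem_Icc.mp (hM hxM)
      have hxI' : ¬(1 ≤ x ∧ x ≤ 2 * l) := fun h => hxI (Finset.mem_Icc.mpr h)
      rw [hU, Finset.mem_Icc]
      omega
    have htailcardA : ∀ M ∈ 𝒜, (M \ Finset.Icc 1 (2 * l)).card = r := by
      intro M hM
      obtain ⟨hMg, hMI⟩ := hmemA.mp hM
      have h := Finset.card_sdiff_add_card_inter M (Finset.Icc 1 (2 * l))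
      rw [hMI, hTcard, (Finset.mem_powersetCard.mp hMg).2] at h
      omega
    have htailcardB : ∀ M ∈ ℬ, (M \ Finset.Icc 1 (2 * l)).card = r := by
      intro M hM
      obtain ⟨hMg, hMI⟩ := hmemB.mp hM
      have h := Finset.card_sdiff_add_card_inter M (Finset.Icc 1 (2 * l))
      rw [hMI, hLcard, (Finset.mem_powersetCard.mp hMg).2] at h
      omega
    have hrec : ∀ (M : Finset ℕ), (M ∩ Finset.Icc 1 (2 * l)) ∪ (M \ Finset.Icc 1 (2 * l)) = M := by
      intro M
      ext x
      simp only [Finset.mem_union, Finset.mem_inter, Finset.mem_sdiff]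
      tauto
    set XA := (F ∩ 𝒜).image (fun M => M \ Finset.Icc 1 (2 * l)) with hXAdef
    set XB := (F ∩ ℬ).image (fun M => M \ Finset.Icc 1 (2 * l)) with hXBdef
    have hXAsub : XA ⊆ U.powersetCard r := by
      intro X hX
      obtain ⟨M, hM, rfl⟩ := Finset.mem_image.mp hX
      have hM𝒜 := (Finset.mem_inter.mp hM).2
      exact Finset.mem_powersetCard.mpr
        ⟨htail (Finset.mem_powersetCard.mp (hmemA.mp hM𝒜).1).1, htailcardA M hM𝒜⟩
    have hXBsub : XB ⊆ U.powersetCard r := by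
      intro X hX
      obtain ⟨M, hM, rfl⟩ := Finset.mem_image.mp hX
      have hMℬ := (Finset.mem_inter.mp hM).2
      exact Finset.mem_powersetCard.mpr
        ⟨htail (Finset.mem_powersetCard.mp (hmemB.mp hMℬ).1).1, htailcardB M hMℬ⟩
    have hinjA : Set.InjOn (fun M => M \ Finset.Icc 1 (2 * l)) ↑(F ∩ 𝒜) := by
      intro M₁ h₁ M₂ h₂ heq
      simp only [Finset.coe_inter, Set.mem_inter_iff, Finset.mem_coe] at h₁ h₂
      have e₁ := (hmemA.mp h₁.2).2
      have e₂ := (hmemA.mp h₂.2).2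
      have heq' : M₁ \ Finset.Icc 1 (2 * l) = M₂ \ Finset.Icc 1 (2 * l) := heq
      calc M₁ = (M₁ ∩ Finset.Icc 1 (2 * l)) ∪ (M₁ \ Finset.Icc 1 (2 * l)) := (hrec M₁).symm
      _ = (M₂ ∩ Finset.Icc 1 (2 * l)) ∪ (M₂ \ Finset.Icc 1 (2 * l)) := by
          rw [e₁, e₂, heq']
      _ = M₂ := hrec M₂
    have hinjB : Set.InjOn (fun M => M \ Finset.Icc 1 (2 * l)) ↑ℬ := by
      intro M₁ h₁ M₂ h₂ heq
      simp only [Finset.mem_coe] at h₁ h₂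
      have e₁ := (hmemB.mp h₁).2
      have e₂ := (hmemB.mp h₂).2
      have heq' : M₁ \ Finset.Icc 1 (2 * l) = M₂ \ Finset.Icc 1 (2 * l) := heq
      calc M₁ = (M₁ ∩ Finset.Icc 1 (2 * l)) ∪ (M₁ \ Finset.Icc 1 (2 * l)) := (hrec M₁).symm
      _ = (M₂ ∩ Finset.Icc 1 (2 * l)) ∪ (M₂ \ Finset.Icc 1 (2 * l)) := by
          rw [e₁, e₂, heq']
      _ = M₂ := hrec M₂
    have hinjB' : Set.InjOn (fun M => M \ Finset.Icc 1 (2 * l)) ↑(F ∩ ℬ) := by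
      intro M₁ h₁ M₂ h₂ heq
      simp only [Finset.coe_inter, Set.mem_inter_iff, Finset.mem_coe] at h₁ h₂
      exact hinjB (Finset.mem_coe.mpr h₁.2) (Finset.mem_coe.mpr h₂.2) heq
    have hcardXA : XA.card = (F ∩ 𝒜).card := Finset.card_image_of_injOn hinjA
    have hcardXB : XB.card = (F ∩ ℬ).card := Finset.card_image_of_injOn hinjB'
    have hBim : ℬ.image (fun M => M \ Finset.Icc 1 (2 * l)) = U.powersetCard r := by
      apply Finset.Subset.antisymm
      · intro X hX
        obtain ⟨M, hM, rfl⟩ := Finset.mem_image.mp hX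
        exact Finset.mem_powersetCard.mpr
          ⟨htail (Finset.mem_powersetCard.mp (hmemB.mp hM).1).1, htailcardB M hM⟩
      · intro Y hY
        obtain ⟨hYU, hYcard⟩ := Finset.mem_powersetCard.mp hY
        have hYlow : ∀ y ∈ Y, 2 * l + 1 ≤ y ∧ y ≤ n := by
          intro y hy
          have := hYU hy
          rw [hU, Finset.mem_Icc] at this
          exact this
        have hdisj : Disjoint L Y := by
          rw [Finset.disjoint_left]
          intro x hxL hxY
          have h1 := Finset.mem_Icc.mp (hLsub hxL)
          have h2 := hYlow x hxY
          omega
        refine Finset.mem_image.mpr ⟨L ∪ Y, hmemB.mpr ⟨?_, ?_⟩, ?_⟩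
        · refine Finset.mem_powersetCard.mpr ⟨?_, ?_⟩
          · intro x hx
            rcases Finset.mem_union.mp hx with h | h
            · have := Finset.mem_Icc.mp (hLsub h)
              exact Finset.mem_Icc.mpr ⟨this.1, by omega⟩
            · have := hYlow x h
              exact Finset.mem_Icc.mpr ⟨by omega, this.2⟩
          · rw [Finset.card_union_of_disjoint hdisj, hLcard, hYcard]
            omega
        · ext x
          simp only [Finset.mem_inter, Finset.mem_union, Finset.mem_Icc]
          constructor
          · rintro ⟨h | h, hI⟩
            · exact h
            · have := hYlow x h
              omega
          · intro hxL
            have := Finset.mem_Icc.mp (hLsub hxL)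
            exact ⟨Or.inl hxL, this⟩
        · ext x
          simp only [Finset.mem_sdiff, Finset.mem_union, Finset.mem_Icc]
          constructor
          · rintro ⟨h | h, hI⟩
            · exact absurd (Finset.mem_Icc.mp (hLsub h)) hI
            · exact h
          · intro hxY
            have := hYlow x hxY
            exact ⟨Or.inr hxY, by omega⟩
    have hBcard : ℬ.card = (U.powersetCard r).card := by
      rw [← hBim]
      exact (Finset.card_image_of_injOn hinjB).symm
    have hcross : ∀ X ∈ XA, ∀ Y ∈ XB, (X ∩ Y).Nonempty := by
      intro X hX Y hY
      obtain ⟨M, hM, rfl⟩ := Finset.mem_image.mp hX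
      obtain ⟨N, hN, rfl⟩ := Finset.mem_image.mp hY
      obtain ⟨hMF, hM𝒜⟩ := Finset.mem_inter.mp hM
      obtain ⟨hNF, hNℬ⟩ := Finset.mem_inter.mp hN
      obtain ⟨z, hz⟩ := hint M hMF N hNF
      obtain ⟨hzM, hzN⟩ := Finset.mem_inter.mp hz
      have hzIcc : z ∉ Finset.Icc 1 (2 * l) := by
        intro hzI
        have e1 := (hmemA.mp hM𝒜).2
        have e2 := (hmemB.mp hNℬ).2
        have h1 : z ∈ F₀ ∩ Finset.Icc 1 (2 * l) := by
          rw [← e1]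
          exact Finset.mem_inter.mpr ⟨hzM, hzI⟩
        have h2 : z ∈ L := by
          rw [← e2]
          exact Finset.mem_inter.mpr ⟨hzN, hzI⟩
        rw [hL] at h2
        exact (Finset.mem_sdiff.mp h2).2 (Finset.mem_inter.mp h1).1
      exact ⟨z, Finset.mem_inter.mpr
        ⟨Finset.mem_sdiff.mpr ⟨hzM, hzIcc⟩, Finset.mem_sdiff.mpr ⟨hzN, hzIcc⟩⟩⟩
    have hUge : 2 * r ≤ U.card := by rw [hUcard]; omega
    have hsum := cross_count U r hUge XA XB hXAsub hXBsub hcross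
    have hc1 : F'.card + ((F \ 𝒜) ∩ ℬ).card = (F \ 𝒜).card + ℬ.card := by
      rw [hF']
      exact Finset.card_union_add_card_inter _ _
    have hc2 : (F \ 𝒜).card + (F ∩ 𝒜).card = F.card :=
      Finset.card_sdiff_add_card_inter F 𝒜
    have hc3 : (F \ 𝒜) ∩ ℬ = F ∩ ℬ := by
      ext S
      simp only [Finset.mem_inter, Finset.mem_sdiff]
      constructor
      · rintro ⟨⟨h1, _⟩, h2⟩
        exact ⟨h1, h2⟩
      · rintro ⟨h1, h2⟩
        refine ⟨⟨h1, fun hS𝒜 => ?_⟩, h2⟩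
        have e1 := (hmemA.mp hS𝒜).2
        have e2 := (hmemB.mp h2).2
        have h3 : F₀ ∩ Finset.Icc 1 (2 * l) = L := e1.symm.trans e2
        have h4 : (1 : ℕ) ∈ F₀ ∩ Finset.Icc 1 (2 * l) := by rw [h3]; exact h1L
        exact h1F₀ (Finset.mem_inter.mp h4).1
      
    have hc4 : (F ∩ 𝒜).card + (F ∩ ℬ).card ≤ ℬ.card := by
      rw [← hcardXA, ← hcardXB, hBcard]
      exact hsum
    rw [hc3] at hc1
    omega
  exact ⟨part1, part2, part3⟩
end

section
/- If families A ⊆ C([n],a) and B ⊆ C([n],b) are cross-intersecting, then the families L(a,|A|) and L(b,|B|) are cross-intersecting as well. -/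
/-- `L(k, m)`: the family of the first `m` sets of `C([n],k)` in the lexicographic
order, i.e. those `k`-element subsets of `[n]` preceded by fewer than `m` others. -/
def lexFam (n k m : ℕ) : Finset (Finset ℕ) :=
  ((Finset.Icc 1 n).powersetCard k).filter
    (fun A => (((Finset.Icc 1 n).powersetCard k).filter (fun C => lexLt C A)).card < m)

/-!
Reading `j : Fin n` as the number `n - j` turns the lexicographic order on subsets of `[n]` into
the reverse of the colex order on subsets of `Fin n`, so `L(a, m)` becomes a final colex segment.
Suppose `S ∈ L(a, |𝒜|)` and `T ∈ L(b, |ℬ|)` are disjoint and put `k = n - a - b`. Complementing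
the `a`-sets from `S` onwards gives the colex initial segment ending at `Sᶜ`, of size at most `|𝒜|`.
Since `T ⊆ Sᶜ`, its `k`-th shadow contains every `b`-set colex-below `T`, that is more than
`C(n, b) - |ℬ|` sets. By Kruskal–Katona the `k`-th shadow of `{Aᶜ | A ∈ 𝒜}` is at least as large,
but cross-intersection makes it disjoint from `ℬ`, so it has at most `C(n, b) - |ℬ|` sets.
-/

open Finset Finset.Colex
open scoped FinsetFamily

namespace Finset

variable {α : Type*} [LinearOrder α]

lemma min_lt_min_iff {s t : Finset α} : s.min < t.min ↔ ∃ x ∈ s, ∀ y ∈ t, x < y := by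
  rcases s.eq_empty_or_nonempty with rfl | hs
  · simp
  rw [← coe_min' hs, min_eq_inf_withTop, Finset.lt_inf_iff (WithTop.coe_lt_top _)]
  simp only [WithTop.coe_lt_coe]
  exact ⟨fun h ↦ ⟨_, min'_mem s hs, h⟩,
    fun ⟨x, hx, h⟩ y hy ↦ (min'_le s x hx).trans_lt (h y hy)⟩

lemma disjoint_shadow_iterate_compls {α : Type*} [Fintype α] [DecidableEq α]
    {𝒜 ℬ : Finset (Finset α)} (hcross : ∀ s ∈ 𝒜, ∀ t ∈ ℬ, (s ∩ t).Nonempty) (k : ℕ) :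
    Disjoint (∂^[k] 𝒜ᶜˢ) ℬ := by
  refine disjoint_left.2 fun t ht htℬ ↦ ?_
  obtain ⟨u, hu, htu, -⟩ := mem_shadow_iterate_iff_exists_sdiff.1 ht
  obtain ⟨x, hx⟩ := hcross _ (mem_compls.1 hu) t htℬ
  rw [mem_inter] at hx
  exact mem_compl.1 hx.1 (htu hx.2)

namespace Colex

variable {𝒜 : Finset (Finset α)} {r : ℕ} {s t : Finset α}

lemma toColex_compl_lt_toColex_compl [Fintype α] :
    toColex sᶜ < toColex tᶜ ↔ toColex t < toColex s := by
  simp only [toColex_lt_toColex_iff_exists_forall_lt, mem_compl, not_not]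
  exact exists_congr fun a ↦ ⟨fun ⟨h₁, h₂, h₃⟩ ↦ ⟨h₂, h₁, fun b hb hbs ↦ h₃ b hbs hb⟩,
    fun ⟨h₁, h₂, h₃⟩ ↦ ⟨h₂, h₁, fun b hbs hb ↦ h₃ b hb hbs⟩⟩

lemma toColex_compl_le_toColex_compl [Fintype α] :
    toColex sᶜ ≤ toColex tᶜ ↔ toColex t ≤ toColex s := by
  rw [← not_lt, ← not_lt, toColex_compl_lt_toColex_compl]

lemma IsInitSeg.initSeg_subset [Fintype α] (h𝒜 : IsInitSeg 𝒜 r) (hs : s ∈ 𝒜) : initSeg s ⊆ 𝒜 := by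
  intro t ht
  obtain ⟨hcard, hle⟩ := mem_initSeg.1 ht
  obtain heq | hlt := hle.eq_or_lt
  · rwa [toColex_inj.1 heq]
  · exact h𝒜.2 hs ⟨hlt, hcard ▸ h𝒜.1 hs⟩

lemma IsInitSeg.shadow_iterate [Finite α] (h𝒜 : IsInitSeg 𝒜 r) (k : ℕ) :
    IsInitSeg (∂^[k] 𝒜) (r - k) := by
  induction k with
  | zero => simpa
  | succ k ih =>
    rw [Function.iterate_succ_apply', ← Nat.sub_sub]
    exact ih.shadow

lemma initSeg_subset_shadow_iterate_initSeg [Fintype α] (hts : t ⊆ s) :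
    initSeg t ⊆ ∂^[#s - #t] (initSeg s) := by
  refine ((isInitSeg_initSeg (s := s)).shadow_iterate _).initSeg_subset ?_
  rw [mem_shadow_iterate_iff_exists_sdiff]
  exact ⟨s, mem_initSeg_self, hts, card_sdiff_of_subset hts⟩

lemma card_initSeg_add_card_filter_lt [Fintype α] :
    #(initSeg s) + #{t ∈ powersetCard #s (univ : Finset α) | toColex s < toColex t}
      = (Fintype.card α).choose #s := by
  have : initSeg s = {t ∈ powersetCard #s (univ : Finset α) | ¬ toColex s < toColex t} := by
    ext t; simp [eq_comm, not_lt]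
  rw [this, add_comm, card_filter_add_card_filter_not, card_powersetCard, card_univ]

lemma card_initSeg_compl [Fintype α] :
    #(initSeg sᶜ) = #{t ∈ powersetCard #s (univ : Finset α) | toColex s < toColex t} + 1 := by
  have hins : {t ∈ powersetCard #s (univ : Finset α) | toColex s ≤ toColex t}
      = insert s {t ∈ powersetCard #s (univ : Finset α) | toColex s < toColex t} := by
    ext t
    simp only [mem_filter, mem_insert, mem_powersetCard_univ, le_iff_eq_or_lt, toColex_inj]
    constructor
    · rintro ⟨hcard, rfl | hlt⟩
      exacts [.inl rfl, .inr ⟨hcard, hlt⟩]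
    · rintro (rfl | h)
      exacts [⟨rfl, .inl rfl⟩, ⟨h.1, .inr h.2⟩]
  rw [← card_insert_of_notMem (a := s) (by simp), ← hins]
  refine card_nbij' compl compl ?_ ?_ (fun _ _ ↦ compl_compl _) (fun _ _ ↦ compl_compl _)
  · intro t ht
    simp only [coe_filter, mem_coe, mem_initSeg, mem_powersetCard_univ, card_compl,
      Set.mem_ofPred_eq] at ht ⊢
    refine ⟨by have := card_le_univ s; omega, toColex_compl_le_toColex_compl.1 ?_⟩
    rw [compl_compl]
    exact ht.2
  · intro t ht
    simp only [coe_filter, mem_coe, mem_initSeg, mem_powersetCard_univ, card_compl,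
      Set.mem_ofPred_eq] at ht ⊢
    exact ⟨by rw [ht.1], toColex_compl_le_toColex_compl.2 ht.2⟩

theorem inter_nonempty_of_card_filter_toColex_lt {n : ℕ} {𝒜 ℬ : Finset (Finset (Fin n))}
    {s t : Finset (Fin n)} (h𝒜 : (𝒜 : Set (Finset (Fin n))).Sized #s)
    (hℬ : (ℬ : Set (Finset (Fin n))).Sized #t) (hcross : ∀ u ∈ 𝒜, ∀ v ∈ ℬ, (u ∩ v).Nonempty)
    (hs : #{u ∈ powersetCard #s univ | toColex s < toColex u} < #𝒜)
    (ht : #{u ∈ powersetCard #t univ | toColex t < toColex u} < #ℬ) :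
    (s ∩ t).Nonempty := by
  by_contra hst
  rw [not_nonempty_iff_eq_empty, ← disjoint_iff_inter_eq_empty] at hst
  have hts : t ⊆ sᶜ := le_compl_iff_disjoint_left.2 hst
  set k := #sᶜ - #t
  have hk : #sᶜ - k = #t := by have := card_le_card hts; omega
  have h𝒜c : (𝒜ᶜˢ : Set (Finset (Fin n))).Sized #sᶜ := by simpa [card_compl] using h𝒜.compls
  have hsh : ∂^[k] 𝒜ᶜˢ ∪ ℬ ⊆ powersetCard #t univ := by
    rw [union_subset_iff, subset_powersetCard_univ_iff, subset_powersetCard_univ_iff]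
    exact ⟨hk ▸ h𝒜c.shadow_iterate, hℬ⟩
  refine lt_irrefl (n.choose #t) ?_
  calc n.choose #t
      = #(initSeg t) + #{u ∈ powersetCard #t univ | toColex t < toColex u} := by
        rw [card_initSeg_add_card_filter_lt, Fintype.card_fin]
    _ < #(initSeg t) + #ℬ := by gcongr
    _ ≤ #(∂^[k] (initSeg sᶜ)) + #ℬ := by
        gcongr
        exact initSeg_subset_shadow_iterate_initSeg hts
    _ ≤ #(∂^[k] 𝒜ᶜˢ) + #ℬ := Nat.add_le_add_right
        (iterated_kk h𝒜c (by rw [card_initSeg_compl, card_compls]; omega) isInitSeg_initSeg) _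
    _ = #(∂^[k] 𝒜ᶜˢ ∪ ℬ) := (card_union_of_disjoint (disjoint_shadow_iterate_compls hcross k)).symm
    _ ≤ #(powersetCard #t (univ : Finset (Fin n))) := card_le_card hsh
    _ = n.choose #t := by rw [card_powersetCard, card_univ, Fintype.card_fin]

end Colex

end Finset

lemma lexLt_iff_exists {A B : Finset ℕ} :
    lexLt A B ↔ ∃ x ∈ A, x ∉ B ∧ ∀ y ∈ B, y ∉ A → x < y := by
  simp only [lexLt, min_lt_min_iff, mem_sdiff, and_imp, and_assoc]

def revEmb (n : ℕ) : Fin n ↪ ℕ :=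
  ⟨fun j ↦ n - j, fun i j h ↦ Fin.ext (by have := i.2; have := j.2; beta_reduce at h; omega)⟩

@[simp] lemma revEmb_apply {n : ℕ} (j : Fin n) : revEmb n j = n - j := rfl

lemma revEmb_strictAnti (n : ℕ) : StrictAnti (revEmb n) := fun i j h ↦ by
  have := j.2; have : (i : ℕ) < j := h; simp only [revEmb_apply]; omega

lemma map_univ_revEmb (n : ℕ) : (univ : Finset (Fin n)).map (revEmb n) = Icc 1 n := by
  ext x
  simp only [mem_map, mem_univ, true_and, mem_Icc, revEmb_apply]
  constructor
  · rintro ⟨j, rfl⟩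
    omega
  · intro hx
    exact ⟨⟨n - x, by omega⟩, by simp only; omega⟩

lemma lexLt_map_revEmb {n : ℕ} {s t : Finset (Fin n)} :
    lexLt (s.map (revEmb n)) (t.map (revEmb n)) ↔ toColex t < toColex s := by
  simp only [lexLt_iff_exists, mem_map, exists_exists_and_eq_and, forall_exists_index, and_imp,
    forall_apply_eq_imp_iff₂, (revEmb n).injective.eq_iff, exists_eq_right,
    (revEmb_strictAnti n).lt_iff_gt, toColex_lt_toColex_iff_exists_forall_lt]

lemma lexFam_eq_map (n k m : ℕ) :
    lexFam n k m = {s ∈ powersetCard k (univ : Finset (Fin n)) |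
      #{t ∈ powersetCard k univ | toColex s < toColex t} < m}.map
        (mapEmbedding (revEmb n)).toEmbedding := by
  rw [lexFam, ← map_univ_revEmb, powersetCard_map, filter_map]
  congr 1
  refine filter_congr fun s _ ↦ ?_
  simp only [Function.comp_apply, RelEmbedding.coe_toEmbedding, mapEmbedding_apply, filter_map,
    Function.comp_def, card_map, lexLt_map_revEmb]

/-- **Kruskal–Katona theorem** (cross-intersecting form): if `𝒜 ⊆ C([n],a)` and
`ℬ ⊆ C([n],b)` are cross-intersecting, then so are `L(a,|𝒜|)` and `L(b,|ℬ|)`. -/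
theorem kruskal_katona_cross (n a b : ℕ)
    (𝒜 ℬ : Finset (Finset ℕ))
    (h𝒜 : 𝒜 ⊆ (Finset.Icc 1 n).powersetCard a)
    (hℬ : ℬ ⊆ (Finset.Icc 1 n).powersetCard b)
    (hcross : ∀ A ∈ 𝒜, ∀ B ∈ ℬ, (A ∩ B).Nonempty) :
    ∀ A ∈ lexFam n a 𝒜.card, ∀ B ∈ lexFam n b ℬ.card, (A ∩ B).Nonempty := by
  rw [← map_univ_revEmb, powersetCard_map, subset_map_iff] at h𝒜 hℬ
  obtain ⟨𝒮, h𝒮, rfl⟩ := h𝒜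
  obtain ⟨𝒯, h𝒯, rfl⟩ := hℬ
  simp only [lexFam_eq_map, forall_mem_map, RelEmbedding.coe_toEmbedding, mapEmbedding_apply,
    mem_filter, mem_powersetCard_univ, card_map, ← map_inter, map_nonempty] at hcross ⊢
  rintro s ⟨rfl, hs⟩ t ⟨rfl, ht⟩
  exact inter_nonempty_of_card_filter_toColex_lt (subset_powersetCard_univ_iff.1 h𝒮)
    (subset_powersetCard_univ_iff.1 h𝒯) hcross hs ht
end

section
/- Let n ≥ a+b, let j ≥ 1 be an integer with a < b, and let F ⊆ C([n],a) and G ⊆ C([n],b) be cross-intersecting families with |F| ≥ C(n−j, a−j). Then |F| + |G| ≤ C(n,b) + C(n−j, a−j) − C(n−j, b). -/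
/-!
Pass to complements: `𝒟 = {[n] \ A : A ∈ F}` is `r`-uniform for `r = n - a`, and `G` avoids its
`(r - b)`-fold shadow, so `|G| ≤ C(n, b) - |∂^(r-b) 𝒟|`. It remains to show
`|𝒟| - |∂^(r-b) 𝒟| ≤ C(m, r) - C(m, b)` for `m = n - j` whenever `|𝒟| ≥ C(m, r)`.

By Kruskal–Katona, `𝒟` may be replaced by a colex initial segment. If `x` is the largest element of
its last set and `x ≥ m`, the segment contains all `r`-subsets of `[0, x)`, which contribute
`C(x, r)` sets and `C(x, b)` shadow sets, and otherwise only sets through `x`. Since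
`x ≤ r + b - 2`, double counting shows the link of `x` has a shadow at least as large as itself,
and `x ↦ C(x, r) - C(x, b)` is nonincreasing for `x < r + b`. If `x < m`, the segment is `C([m], r)`
and Lovász's form of Kruskal–Katona applies.
-/

open Finset
open scoped FinsetFamily

namespace Nat

theorem choose_le_choose_of_le_of_le_add {N c l : ℕ} (hcl : c ≤ l) (hN : N ≤ l + c) :
    N.choose l ≤ N.choose c := by
  -- count the pairs `c`-set ⊆ `l`-set ⊆ `[N]` in two ways
  have hcount : N.choose l * l.choose c = N.choose c * (N - c).choose (l - c) :=
    choose_mul hcl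
  have hsuper : (N - c).choose (l - c) ≤ l.choose c := by
    rw [← choose_symm hcl]
    exact choose_le_choose _ (by omega)
  refine Nat.le_of_mul_le_mul_right ?_ (choose_pos hcl)
  calc N.choose l * l.choose c = N.choose c * (N - c).choose (l - c) := hcount
    _ ≤ N.choose c * l.choose c := Nat.mul_le_mul_left _ hsuper

-- `x ↦ C(x, r) - C(x, b)` is nonincreasing on `x < r + b`
theorem choose_add_choose_le_choose_add_choose {r b m x : ℕ} (hb : 1 ≤ b) (hbr : b ≤ r)
    (hmx : m ≤ x) (hx : x + 1 ≤ r + b) : x.choose r + m.choose b ≤ m.choose r + x.choose b := by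
  induction x, hmx using Nat.le_induction with
  | base => omega
  | succ y hmy ih =>
    obtain ⟨b, rfl⟩ : ∃ b', b = b' + 1 := ⟨b - 1, by omega⟩
    obtain ⟨r, rfl⟩ : ∃ r', r = r' + 1 := ⟨r - 1, by omega⟩
    have hstep : y.choose r ≤ y.choose b :=
      choose_le_choose_of_le_of_le_add (by omega) (by omega)
    rw [choose_succ_succ' y b, choose_succ_succ' y r]
    have := ih (by omega)
    omega

end Nat

namespace Finset

section DecidableEq

variable {α : Type*} [DecidableEq α]

theorem card_le_card_shadow_iterate {𝒜 : Finset (Finset α)} {U : Finset α} {l k : ℕ}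
    (h𝒜 : 𝒜 ⊆ U.powersetCard l) (hk : k ≤ l) (hU : #U + k ≤ 2 * l) :
    #𝒜 ≤ #(∂^[k] 𝒜) := by
  have hsized : (𝒜 : Set (Finset α)).Sized l := fun A hA => (mem_powersetCard.1 (h𝒜 hA)).2
  -- double count the pairs `S ⊆ A` with `A ∈ 𝒜` and `S ∈ ∂^[k] 𝒜`
  have hdouble : #𝒜 * l.choose k ≤ #(∂^[k] 𝒜) * (#U - (l - k)).choose k := by
    refine card_mul_le_card_mul (fun A S => S ⊆ A) (fun A hA => ?_) (fun S hS => ?_)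
    · have hsub : A.powersetCard (l - k) ⊆ (∂^[k] 𝒜).bipartiteAbove (fun A S => S ⊆ A) A := by
        intro S hS
        obtain ⟨hSA, hScard⟩ := mem_powersetCard.1 hS
        refine mem_filter.2 ⟨mem_shadow_iterate_iff_exists_sdiff.2 ⟨A, hA, hSA, ?_⟩, hSA⟩
        rw [card_sdiff_of_subset hSA, hsized hA, hScard]
        omega
      calc l.choose k = l.choose (l - k) := (Nat.choose_symm hk).symm
        _ = #(A.powersetCard (l - k)) := by rw [card_powersetCard, hsized hA]
        _ ≤ _ := card_le_card hsub
    · obtain ⟨A₀, hA₀, hSA₀, -⟩ := mem_shadow_iterate_iff_exists_sdiff.1 hS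
      have hSU : S ⊆ U := hSA₀.trans (mem_powersetCard.1 (h𝒜 hA₀)).1
      have hScard : #S = l - k := hsized.shadow_iterate hS
      calc #(𝒜.bipartiteBelow (fun A S => S ⊆ A) S) ≤ #((U \ S).powersetCard k) := by
            refine card_le_card_of_injOn (· \ S) (fun A hA => ?_) (fun A hA B hB hAB => ?_)
            · obtain ⟨hA, hSA⟩ := mem_filter.1 hA
              obtain ⟨hAU, hAcard⟩ := mem_powersetCard.1 (h𝒜 hA)
              refine mem_powersetCard.2 ⟨sdiff_subset_sdiff hAU subset_rfl, ?_⟩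
              rw [card_sdiff_of_subset hSA, hAcard, hScard]
              omega
            · have hSA := (mem_filter.1 hA).2
              have hSB := (mem_filter.1 hB).2
              simp only at hAB
              rw [← union_sdiff_of_subset hSA, ← union_sdiff_of_subset hSB, hAB]
        _ = (#U - (l - k)).choose k := by
            rw [card_powersetCard, card_sdiff_of_subset hSU, hScard]
  have hchoose : (#U - (l - k)).choose k ≤ l.choose k := Nat.choose_le_choose _ (by omega)
  exact Nat.le_of_mul_le_mul_right (hdouble.trans (Nat.mul_le_mul_left _ hchoose))
    (Nat.choose_pos hk)

theorem shadow_iterate_memberSubfamily_subset (a : α) (𝒜 : Finset (Finset α)) (k : ℕ) :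
    ∂^[k] (𝒜.memberSubfamily a) ⊆ (∂^[k] 𝒜).memberSubfamily a := by
  intro T hT
  obtain ⟨u, hucard, hTu, hTu𝒜⟩ := mem_shadow_iterate_iff_exists_card.1 hT
  obtain ⟨hinsert, haTu⟩ := mem_memberSubfamily.1 hTu𝒜
  refine mem_memberSubfamily.2 ⟨mem_shadow_iterate_iff_exists_card.2 ⟨u, hucard, ?_, ?_⟩,
    fun h => haTu (mem_union_left u h)⟩
  · exact disjoint_insert_left.2 ⟨fun h => haTu (mem_union_right T h), hTu⟩
  · rwa [insert_union]

end DecidableEq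

variable {α : Type*} [LinearOrder α] [LocallyFiniteOrderBot α]

theorem card_add_choose_le_choose_add_card_shadow_iterate_of_subset_Iic {𝒞 : Finset (Finset α)}
    {x : α} {r b : ℕ} (hlow : (Iio x).powersetCard r ⊆ 𝒞) (hup : 𝒞 ⊆ (Iic x).powersetCard r)
    (hbr : b ≤ r) (hr : r ≤ #(Iio x)) (hx : #(Iio x) + 2 ≤ r + b) :
    #𝒞 + (#(Iio x)).choose b ≤ (#(Iio x)).choose r + #(∂^[r - b] 𝒞) := by
  have hIio {C : Finset α} (hC : C ⊆ Iic x) (hxC : x ∉ C) : C ⊆ Iio x := by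
    rw [← Iic_erase]
    exact subset_erase.2 ⟨hC, hxC⟩
  have hmember : 𝒞.memberSubfamily x ⊆ (Iio x).powersetCard (r - 1) := by
    intro C hC
    obtain ⟨hxC𝒞, hxC⟩ := mem_memberSubfamily.1 hC
    obtain ⟨hxCx, hxCcard⟩ := mem_powersetCard.1 (hup hxC𝒞)
    rw [card_insert_of_notMem hxC] at hxCcard
    exact mem_powersetCard.2 ⟨hIio ((subset_insert x C).trans hxCx) hxC, by omega⟩
  have hnonmember : 𝒞.nonMemberSubfamily x ⊆ (Iio x).powersetCard r := by
    intro C hC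
    obtain ⟨hC𝒞, hxC⟩ := mem_nonMemberSubfamily.1 hC
    obtain ⟨hCx, hCcard⟩ := mem_powersetCard.1 (hup hC𝒞)
    exact mem_powersetCard.2 ⟨hIio hCx hxC, hCcard⟩
  have hshadow_nonmember : (Iio x).powersetCard b ⊆ (∂^[r - b] 𝒞).nonMemberSubfamily x := by
    intro S hS
    obtain ⟨hSx, hScard⟩ := mem_powersetCard.1 hS
    obtain ⟨T, hST, hTx, hTcard⟩ :=
      exists_subsuperset_card_eq (n := r) hSx (by omega) (by omega)
    refine mem_nonMemberSubfamily.2 ⟨mem_shadow_iterate_iff_exists_sdiff.2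
      ⟨T, hlow (mem_powersetCard.2 ⟨hTx, hTcard⟩), hST, ?_⟩,
      fun h => lt_irrefl x (mem_Iio.1 (hSx h))⟩
    rw [card_sdiff_of_subset hST, hTcard, hScard]
  have hmember_shadow : #(𝒞.memberSubfamily x) ≤ #((∂^[r - b] 𝒞).memberSubfamily x) :=
    (card_le_card_shadow_iterate hmember (by omega) (by omega)).trans
      (card_le_card (shadow_iterate_memberSubfamily_subset x 𝒞 (r - b)))
  calc #𝒞 + (#(Iio x)).choose b
      = #(𝒞.memberSubfamily x) + #(𝒞.nonMemberSubfamily x) + #((Iio x).powersetCard b) := by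
        rw [card_memberSubfamily_add_card_nonMemberSubfamily, card_powersetCard]
    _ ≤ #((∂^[r - b] 𝒞).memberSubfamily x) + #((Iio x).powersetCard r)
          + #((∂^[r - b] 𝒞).nonMemberSubfamily x) :=
        add_le_add_three hmember_shadow (card_le_card hnonmember)
          (card_le_card hshadow_nonmember)
    _ = (#(Iio x)).choose r + #(∂^[r - b] 𝒞) := by
        rw [card_powersetCard, ← card_memberSubfamily_add_card_nonMemberSubfamily x (∂^[r - b] 𝒞)]
        ring

end Finset

namespace Finset.Colex

variable {α : Type*} [LinearOrder α] [Fintype α]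

theorem exists_isInitSeg_card {r N : ℕ} (hN : N ≤ (Fintype.card α).choose r) :
    ∃ 𝒞 : Finset (Finset α), IsInitSeg 𝒞 r ∧ #𝒞 = N := by
  induction N with
  | zero => exact ⟨∅, isInitSeg_empty, rfl⟩
  | succ N ih =>
    obtain ⟨𝒞, h𝒞, rfl⟩ := ih (by omega)
    have hrest : ((univ : Finset α).powersetCard r \ 𝒞).Nonempty := by
      rw [← card_pos, card_sdiff_of_subset h𝒞.1.subset_powersetCard_univ, card_powersetCard,
        card_univ]
      omega
    -- extend `𝒞` by the colex-smallest `r`-set it misses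
    obtain ⟨t, ht, htmin⟩ := exists_min_image _ toColex hrest
    obtain ⟨htr, ht𝒞⟩ := mem_sdiff.1 ht
    refine ⟨insert t 𝒞, ⟨?_, fun s u hs ⟨hus, hu⟩ => ?_⟩, card_insert_of_notMem ht𝒞⟩
    · intro u hu
      obtain rfl | hu := mem_insert.1 hu
      exacts [mem_powersetCard_univ.1 htr, h𝒞.1 hu]
    obtain rfl | hs := mem_insert.1 hs
    · by_contra hu𝒞
      have hu' : u ∈ (univ : Finset α).powersetCard r \ 𝒞 :=
        mem_sdiff.2 ⟨mem_powersetCard_univ.2 hu, fun h => hu𝒞 (mem_insert_of_mem h)⟩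
      exact (htmin u hu').not_gt hus
    · exact mem_insert_of_mem (h𝒞.2 hs ⟨hus, hu⟩)

variable [LocallyFiniteOrderBot α] {s : Finset α}

theorem powersetCard_Iio_max'_subset_initSeg (hs : s.Nonempty) :
    (Iio (s.max' hs)).powersetCard #s ⊆ initSeg s := by
  intro t ht
  obtain ⟨hts, htcard⟩ := mem_powersetCard.1 ht
  refine mem_initSeg.2 ⟨htcard.symm, le_of_lt (toColex_lt_toColex_iff_exists_forall_lt.2
    ⟨s.max' hs, max'_mem s hs, fun h => lt_irrefl _ (mem_Iio.1 (hts h)),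
      fun y hy _ => mem_Iio.1 (hts hy)⟩)⟩

theorem initSeg_subset_powersetCard_Iic_max' (hs : s.Nonempty) :
    initSeg s ⊆ (Iic (s.max' hs)).powersetCard #s := by
  intro t ht
  obtain ⟨hcard, hts⟩ := mem_initSeg.1 ht
  exact mem_powersetCard.2 ⟨fun y hy => mem_Iic.2
    (forall_le_mono hts (fun z hz => le_max' s z hz) y hy), hcard.symm⟩

end Finset.Colex

namespace Finset

theorem card_add_choose_le_choose_add_card_shadow_iterate {n r b m : ℕ}
    {𝒟 : Finset (Finset (Fin n))} (h𝒟 : (𝒟 : Set (Finset (Fin n))).Sized r) (hbr : b ≤ r)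
    (hrm : r ≤ m) (hmn : m ≤ n) (hn : n < r + b) (hcard : m.choose r ≤ #𝒟) :
    #𝒟 + m.choose b ≤ m.choose r + #(∂^[r - b] 𝒟) := by
  obtain ⟨𝒞, h𝒞, h𝒞card⟩ := Colex.exists_isInitSeg_card (α := Fin n) h𝒟.card_le
  have hKK : #(∂^[r - b] 𝒞) ≤ #(∂^[r - b] 𝒟) := iterated_kk h𝒟 h𝒞card.le h𝒞
  have h𝒞ne : 𝒞.Nonempty := card_pos.1 (h𝒞card ▸ (Nat.choose_pos hrm).trans_le hcard)
  obtain ⟨s, hsr, rfl⟩ := h𝒞.exists_initSeg h𝒞ne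
  have hs : s.Nonempty := card_pos.1 (by omega)
  have hlow := Colex.powersetCard_Iio_max'_subset_initSeg hs
  have hup := Colex.initSeg_subset_powersetCard_Iic_max' hs
  rw [hsr] at hlow hup
  set x := s.max' hs
  rcases le_or_gt m x with hmx | hxm
  · have hsqueeze := card_add_choose_le_choose_add_card_shadow_iterate_of_subset_Iic hlow hup
      hbr (by rw [Fin.card_Iio]; omega) (by rw [Fin.card_Iio]; omega)
    have hmono := Nat.choose_add_choose_le_choose_add_choose (by omega) hbr hmx (by omega)
    rw [Fin.card_Iio] at hsqueeze
    omega
  · -- `initSeg s` lies in `C([m], r)`, so `|𝒟| = C(m, r)`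
    have hle : #𝒟 ≤ m.choose r := by
      calc #𝒟 = #(Colex.initSeg s) := h𝒞card.symm
        _ ≤ (x + 1 : ℕ).choose r := by
          simpa [Fin.card_Iic] using card_le_card hup
        _ ≤ m.choose r := Nat.choose_le_choose _ hxm
    have hlovasz := kruskal_katona_lovasz_form (i := r - b) (by omega) hrm hmn h𝒟 hcard
    rw [Nat.sub_sub_self hbr] at hlovasz
    omega

theorem card_add_card_add_choose_le_of_cross_intersecting {n a b j : ℕ}
    {𝒜 ℬ : Finset (Finset (Fin n))} (h𝒜 : (𝒜 : Set (Finset (Fin n))).Sized a)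
    (hℬ : (ℬ : Set (Finset (Fin n))).Sized b) (hcross : ∀ A ∈ 𝒜, ∀ B ∈ ℬ, (A ∩ B).Nonempty)
    (hja : j ≤ a) (hab : a < b) (hn : a + b ≤ n) (hlow : (n - j).choose (a - j) ≤ #𝒜) :
    #𝒜 + #ℬ + (n - j).choose b ≤ n.choose b + (n - j).choose (a - j) := by
  have h𝒜c : (𝒜ᶜˢ : Set (Finset (Fin n))).Sized (n - a) := by
    simpa using h𝒜.compls
  have hsymm : (n - j).choose (n - a) = (n - j).choose (a - j) :=
    Nat.choose_symm_of_eq_add (by omega)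
  -- a `b`-set below the complement of `A ∈ 𝒜` misses `A`, so it cannot lie in `ℬ`
  have hdisj : Disjoint ℬ (∂^[n - a - b] 𝒜ᶜˢ) := by
    refine disjoint_left.2 fun B hB hB' => ?_
    obtain ⟨C, hC, hBC, -⟩ := mem_shadow_iterate_iff_exists_sdiff.1 hB'
    obtain ⟨y, hy⟩ := hcross Cᶜ (mem_compls.1 hC) B hB
    exact mem_compl.1 (mem_inter.1 hy).1 (hBC (mem_inter.1 hy).2)
  have hlevel : ℬ ∪ ∂^[n - a - b] 𝒜ᶜˢ ⊆ (univ : Finset (Fin n)).powersetCard b := by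
    refine union_subset hℬ.subset_powersetCard_univ ?_
    simpa [show n - a - (n - a - b) = b by omega] using
      (h𝒜c.shadow_iterate (k := n - a - b)).subset_powersetCard_univ
  have hunion := card_le_card hlevel
  rw [card_union_of_disjoint hdisj, card_powersetCard, card_univ, Fintype.card_fin] at hunion
  have hshadow := card_add_choose_le_choose_add_card_shadow_iterate h𝒜c
    (m := n - j) (b := b) (by omega) (by omega) (by omega) (by omega)
    (by rw [hsymm, card_compls]; exact hlow)
  rw [card_compls, hsymm] at hshadow
  omega

theorem exists_sized_map_eq_of_subset_powersetCard_map {α β : Type*} [Fintype α] (e : α ↪ β)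
    {c : ℕ} {H : Finset (Finset β)} (hH : H ⊆ ((univ : Finset α).map e).powersetCard c) :
    ∃ ℋ : Finset (Finset α), (ℋ : Set (Finset α)).Sized c ∧
      H = ℋ.map (mapEmbedding e).toEmbedding := by
  rw [powersetCard_map] at hH
  obtain ⟨ℋ, hℋ, rfl⟩ := subset_map_iff.1 hH
  exact ⟨ℋ, subset_powersetCard_univ_iff.1 hℋ, rfl⟩

end Finset

theorem Fin.map_valEmbedding_trans_addRightEmbedding_one_univ (n : ℕ) :
    (univ : Finset (Fin n)).map (Fin.valEmbedding.trans (addRightEmbedding 1)) = Icc 1 n := by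
  ext y
  simp only [mem_map, mem_univ, true_and, mem_Icc, Fin.exists_iff, Function.Embedding.trans_apply,
    Fin.valEmbedding_apply, addRightEmbedding_apply]
  exact ⟨fun ⟨i, hi, hy⟩ => by omega, fun h => ⟨y - 1, by omega, by omega⟩⟩

theorem sum_bound_point1_general (n a b j : ℕ) (hab : a < b) (hn : a + b ≤ n)
    (F G : Finset (Finset ℕ))
    (hF : F ⊆ (Finset.Icc 1 n).powersetCard a)
    (hG : G ⊆ (Finset.Icc 1 n).powersetCard b)
    (hcross : ∀ A ∈ F, ∀ B ∈ G, (A ∩ B).Nonempty)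
    (hFlow : (n - j).choose (a - j) ≤ F.card) :
    F.card + G.card ≤ n.choose b + (n - j).choose (a - j) - (n - j).choose b := by
  let e : Fin n ↪ ℕ := Fin.valEmbedding.trans (addRightEmbedding 1)
  have he := Fin.map_valEmbedding_trans_addRightEmbedding_one_univ n
  obtain ⟨𝒜, h𝒜, rfl⟩ := exists_sized_map_eq_of_subset_powersetCard_map e (he ▸ hF)
  obtain ⟨ℬ, hℬ, rfl⟩ := exists_sized_map_eq_of_subset_powersetCard_map e (he ▸ hG)
  have hcross' : ∀ A ∈ 𝒜, ∀ B ∈ ℬ, (A ∩ B).Nonempty := fun A hA B hB => by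
    simpa [← map_inter] using hcross _ (mem_map_of_mem _ hA) _ (mem_map_of_mem _ hB)
  simp only [card_map] at hFlow ⊢
  -- for `j > a` the lower bound on `|F|` says only `F ≠ ∅`, as it does for `j = a`
  have hchoose : (n - min j a).choose (a - min j a) = (n - j).choose (a - j) := by
    rcases le_total j a with h | h
    · simp [h]
    · simp [h, Nat.sub_eq_zero_of_le h]
  have hbound := card_add_card_add_choose_le_of_cross_intersecting h𝒜 hℬ hcross'
    (min_le_right j a) hab hn (hchoose ▸ hFlow)
  have hmono : (n - j).choose b ≤ (n - min j a).choose b := Nat.choose_le_choose _ (by omega)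
  omega

/-- Theorem 2, Point 1: let `n ≥ a + b`, `j ≥ 1`, `a < b`, and let `F ⊆ C([n],a)`,
`G ⊆ C([n],b)` be cross-intersecting with `|F| ≥ C(n-j, a-j)`. Then
`|F| + |G| ≤ C(n,b) + C(n-j, a-j) - C(n-j, b)`. -/
theorem sum_bound_point1 (n a b j : ℕ) (hj : 1 ≤ j) (hab : a < b) (hn : a + b ≤ n)
    (F G : Finset (Finset ℕ))
    (hF : F ⊆ (Finset.Icc 1 n).powersetCard a)
    (hG : G ⊆ (Finset.Icc 1 n).powersetCard b)
    (hcross : ∀ A ∈ F, ∀ B ∈ G, (A ∩ B).Nonempty)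
    (hFlow : (n - j).choose (a - j) ≤ F.card) :
    F.card + G.card ≤ n.choose b + (n - j).choose (a - j) - (n - j).choose b :=
  sum_bound_point1_general n a b j hab hn F G hF hG hcross hFlow
end

section
/- Let F ⊆ C([n],k) be an intersecting family and let i, j ∈ [n] be distinct elements with 1 ≤ i < j ≤ n such that |{F ∈ F : i ∈ F}| ≥ |{F ∈ F : j ∈ F}|. Then γ(F) − γ(S_{i,j}(F)) ≤ C(n−3, k−2). -/
/-- The maximal degree `Δ(F) = max_{i ∈ [n]} |{F ∈ F : i ∈ F}|`. -/
def maxDegree (n : ℕ) (F : Finset (Finset ℕ)) : ℕ :=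
  (Finset.Icc 1 n).sup (fun i => (F.filter (fun A => i ∈ A)).card)

/-- The diversity `γ(F) = |F| - Δ(F)`. -/
def diversity (n : ℕ) (F : Finset (Finset ℕ)) : ℕ :=
  F.card - maxDegree n F

/-!
The shift preserves `|F|`, and it raises no degree by more than the number of sets `A ∈ F` with
`S_{i,j}(A) ∉ F`, so `γ` drops by at most that number. Those sets contain `j` but not `i`.
Deleting `j` from them, and `i` from the sets of `F` that contain `i` but not `j`, yields two
disjoint cross-intersecting families of `(k-1)`-subsets of `[n] \ {i,j}`, and the degree
hypothesis makes the first one the smaller. If `n ≥ 2k`, the Kruskal–Katona theorem applied to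
the complements of the second family bounds the smaller one by `C(n-3,k-2)`; if `n < 2k`,
disjointness alone suffices, because then `C(n-2,k-1) ≤ 2 C(n-3,k-2)`.
-/

open Finset
open scoped FinsetFamily

theorem Nat.choose_succ_le_choose_of_le_two_mul_add_one {N s : ℕ} (h : N ≤ 2 * s + 1) :
    N.choose (s + 1) ≤ N.choose s := by
  refine Nat.le_of_mul_le_mul_right ?_ s.succ_pos
  rw [Nat.choose_succ_right_eq]
  exact Nat.mul_le_mul_left _ (by omega)

section CrossIntersecting

variable {m r : ℕ} {𝒜 ℬ : Finset (Finset (Fin m))}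

theorem card_le_choose_of_crossIntersecting_of_two_mul_le
    (h𝒜 : (𝒜 : Set (Finset (Fin m))).Sized r) (hℬ : (ℬ : Set (Finset (Fin m))).Sized r)
    (hcross : ∀ a ∈ 𝒜, ∀ b ∈ ℬ, ¬Disjoint a b) (hrm : 2 * r ≤ m) (hle : #ℬ ≤ #𝒜) :
    #ℬ ≤ (m - 1).choose (r - 1) := by
  obtain rfl | hr := Nat.eq_zero_or_pos r
  · simpa using hℬ.card_le
  refine le_of_not_gt fun hlt ↦ ?_
  have hrm' : r ≤ m := by omega
  -- A member of `ℬ` meets every member of `𝒜`, so it is contained in none of their complements.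
  have hdisj : Disjoint ℬ (∂^[m - 2 * r] 𝒜ᶜˢ) := disjoint_right.2 fun b hb hbℬ ↦ by
    simp only [mem_shadow_iterate_iff_exists_sdiff, mem_compls] at hb
    obtain ⟨c, hc, hbc, _⟩ := hb
    exact hcross _ hc _ hbℬ (disjoint_of_subset_right hbc disjoint_compl_left)
  have hcompl : (m - 1).choose (m - r) ≤ #𝒜ᶜˢ := by
    rw [card_compls, Nat.choose_symm_of_eq_add (show m - 1 = (m - r) + (r - 1) by omega)]
    omega
  have h𝒜c : (𝒜ᶜˢ : Set (Finset (Fin m))).Sized (m - r) := by simpa using h𝒜.compls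
  have hkk := kruskal_katona_lovasz_form (i := m - 2 * r) (by omega) (by omega) (by omega) h𝒜c
    hcompl
  have hshadow : (∂^[m - 2 * r] 𝒜ᶜˢ : Set (Finset (Fin m))).Sized r := by
    convert h𝒜c.shadow_iterate using 1
    omega
  rw [show m - r - (m - 2 * r) = r by omega] at hkk
  have hunion := Set.Sized.card_le (𝒜 := ℬ ∪ ∂^[m - 2 * r] 𝒜ᶜˢ)
    (by rw [coe_union, Set.sized_union]; exact ⟨hℬ, hshadow⟩)
  rw [Fintype.card_fin, card_union_of_disjoint hdisj] at hunion
  have hpascal := Nat.choose_eq_choose_pred_add (n := m) (by omega) hr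
  omega

theorem card_le_choose_of_disjoint_of_lt_two_mul
    (h𝒜 : (𝒜 : Set (Finset (Fin m))).Sized r) (hℬ : (ℬ : Set (Finset (Fin m))).Sized r)
    (hdisj : Disjoint 𝒜 ℬ) (hmr : m < 2 * r) (hle : #ℬ ≤ #𝒜) :
    #ℬ ≤ (m - 1).choose (r - 1) := by
  have hunion := Set.Sized.card_le (𝒜 := 𝒜 ∪ ℬ)
    (by rw [coe_union, Set.sized_union]; exact ⟨h𝒜, hℬ⟩)
  rw [Fintype.card_fin, card_union_of_disjoint hdisj] at hunion
  obtain rfl | hm := Nat.eq_zero_or_pos m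
  · rw [Nat.choose_eq_zero_of_lt (by omega)] at hunion
    omega
  have hpascal := Nat.choose_eq_choose_pred_add (k := r) hm (by omega)
  have hmono : (m - 1).choose r ≤ (m - 1).choose (r - 1) := by
    have := Nat.choose_succ_le_choose_of_le_two_mul_add_one (N := m - 1) (s := r - 1) (by omega)
    rwa [Nat.sub_add_cancel (by omega)] at this
  omega

theorem card_le_choose_of_crossIntersecting
    (h𝒜 : (𝒜 : Set (Finset (Fin m))).Sized r) (hℬ : (ℬ : Set (Finset (Fin m))).Sized r)
    (hcross : ∀ a ∈ 𝒜, ∀ b ∈ ℬ, ¬Disjoint a b) (hdisj : Disjoint 𝒜 ℬ) (hle : #ℬ ≤ #𝒜) :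
    #ℬ ≤ (m - 1).choose (r - 1) := by
  rcases le_or_gt (2 * r) m with hrm | hmr
  · exact card_le_choose_of_crossIntersecting_of_two_mul_le h𝒜 hℬ hcross hrm hle
  · exact card_le_choose_of_disjoint_of_lt_two_mul h𝒜 hℬ hdisj hmr hle

end CrossIntersecting

theorem Finset.exists_eq_map_mapEmbedding {α β : Type*} [Fintype α] (e : α ↪ β)
    {𝒞 : Finset (Finset β)} (h𝒞 : ∀ c ∈ 𝒞, c ⊆ univ.map e) :
    ∃ 𝒞' : Finset (Finset α), 𝒞 = 𝒞'.map (mapEmbedding e).toEmbedding := by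
  obtain ⟨𝒞', -, h⟩ := subset_map_iff.1 fun c hc ↦ by
    obtain ⟨c', -, rfl⟩ := subset_map_iff.1 (h𝒞 c hc)
    exact mem_map_of_mem (mapEmbedding e).toEmbedding (mem_univ c')
  exact ⟨𝒞', h⟩

theorem card_le_choose_of_crossIntersecting_of_subset {β : Type*} [LinearOrder β] {m r : ℕ}
    {X : Finset β} (hX : #X = m) {𝒜 ℬ : Finset (Finset β)}
    (h𝒜X : ∀ a ∈ 𝒜, a ⊆ X) (hℬX : ∀ b ∈ ℬ, b ⊆ X)
    (h𝒜 : ∀ a ∈ 𝒜, #a = r) (hℬ : ∀ b ∈ ℬ, #b = r)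
    (hcross : ∀ a ∈ 𝒜, ∀ b ∈ ℬ, ¬Disjoint a b) (hdisj : Disjoint 𝒜 ℬ) (hle : #ℬ ≤ #𝒜) :
    #ℬ ≤ (m - 1).choose (r - 1) := by
  have hXe : univ.map (X.orderEmbOfFin hX).toEmbedding = X := map_orderEmbOfFin_univ X hX
  obtain ⟨𝒜, rfl⟩ := exists_eq_map_mapEmbedding _ (hXe ▸ h𝒜X)
  obtain ⟨ℬ, rfl⟩ := exists_eq_map_mapEmbedding _ (hXe ▸ hℬX)
  simp only [mem_map, RelEmbedding.coe_toEmbedding, mapEmbedding_apply, forall_exists_index,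
    and_imp, forall_apply_eq_imp_iff₂, card_map, disjoint_map] at *
  exact card_le_choose_of_crossIntersecting h𝒜 hℬ hcross hdisj hle

section Shift

variable {i j : ℕ}

theorem shiftSet_eq_compress (hij : i ≠ j) : shiftSet i j = UV.compress {i} {j} := by
  ext A : 1
  simp only [shiftSet, UV.compress, disjoint_singleton_left, singleton_subset_iff,
    sup_eq_union]
  split_ifs with h₁ h₂ h₂
  · tauto
  · rfl
  · ext x
    simp only [mem_insert, mem_erase, mem_sdiff, mem_union, mem_singleton]
    grind
  · tauto

theorem shiftFam_eq_compression (hij : i ≠ j) (F : Finset (Finset ℕ)) :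
    shiftFam i j F = UV.compression {i} {j} F := by
  ext X
  rw [UV.mem_compression, shiftFam, shiftSet_eq_compress hij, mem_union, mem_image, mem_filter]
  constructor
  · rintro (⟨A, hA, rfl⟩ | hX)
    · by_cases hAF : UV.compress {i} {j} A ∈ F
      · exact .inl ⟨hAF, by rwa [UV.compress_idem]⟩
      · exact .inr ⟨hAF, A, hA, rfl⟩
    · exact .inl hX
  · rintro (hX | ⟨-, hX⟩)
    · exact .inr hX
    · exact .inl hX

theorem card_shiftFam (hij : i ≠ j) (F : Finset (Finset ℕ)) : #(shiftFam i j F) = #F := by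
  rw [shiftFam_eq_compression hij, UV.card_compression]

theorem shiftSet_insert (hij : i ≠ j) {s : Finset ℕ} (hi : i ∉ s) (hj : j ∉ s) :
    shiftSet i j (insert j s) = insert i s := by
  rw [shiftSet, if_neg (by simp [hij, hi]), erase_insert hj]

def movedSets (i j : ℕ) (F : Finset (Finset ℕ)) : Finset (Finset ℕ) :=
  {A ∈ F | shiftSet i j A ∉ F}

variable {F : Finset (Finset ℕ)} {A : Finset ℕ}

theorem mem_movedSets : A ∈ movedSets i j F ↔ A ∈ F ∧ shiftSet i j A ∉ F := mem_filter

theorem notMem_and_mem_of_mem_movedSets (hA : A ∈ movedSets i j F) : i ∉ A ∧ j ∈ A := by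
  rw [mem_movedSets, shiftSet] at hA
  by_contra h
  exact hA.2 (by rw [if_pos (by tauto)]; exact hA.1)

theorem shiftFam_subset : shiftFam i j F ⊆ F ∪ (movedSets i j F).image (shiftSet i j) := by
  intro X hX
  simp only [shiftFam, mem_union, mem_image, mem_filter] at hX ⊢
  rcases hX with ⟨A, hA, rfl⟩ | ⟨hX, -⟩
  · by_cases hAF : shiftSet i j A ∈ F
    · exact .inl hAF
    · exact .inr ⟨A, mem_movedSets.2 ⟨hA, hAF⟩, rfl⟩
  · exact .inl hX

theorem card_filter_mem_shiftFam_le (l : ℕ) :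
    #{X ∈ shiftFam i j F | l ∈ X} ≤ #{A ∈ F | l ∈ A} + #(movedSets i j F) :=
  calc #{X ∈ shiftFam i j F | l ∈ X}
      ≤ #{X ∈ F ∪ (movedSets i j F).image (shiftSet i j) | l ∈ X} :=
        card_le_card (filter_subset_filter _ shiftFam_subset)
    _ ≤ #{A ∈ F | l ∈ A} + #((movedSets i j F).image (shiftSet i j)) := by
        rw [filter_union]
        exact (card_union_le _ _).trans (Nat.add_le_add_left (card_filter_le _ _) _)
    _ ≤ #{A ∈ F | l ∈ A} + #(movedSets i j F) := Nat.add_le_add_left card_image_le _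

theorem maxDegree_shiftFam_le (n : ℕ) :
    maxDegree n (shiftFam i j F) ≤ maxDegree n F + #(movedSets i j F) :=
  Finset.sup_le fun l hl ↦ (card_filter_mem_shiftFam_le l).trans
    (Nat.add_le_add_right (le_sup (f := fun l ↦ #{A ∈ F | l ∈ A}) hl) _)

theorem diversity_sub_diversity_shiftFam_le (n : ℕ) (hij : i ≠ j) :
    diversity n F - diversity n (shiftFam i j F) ≤ #(movedSets i j F) := by
  have := maxDegree_shiftFam_le (i := i) (j := j) (F := F) n
  rw [diversity, diversity, card_shiftFam hij]
  omega

end Shift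

section Families

variable {α : Type*} [DecidableEq α]

theorem Finset.card_memberSubfamily (a : α) (𝒜 : Finset (Finset α)) :
    #(𝒜.memberSubfamily a) = #{s ∈ 𝒜 | a ∈ s} :=
  card_image_of_injOn ((erase_injOn' a).mono fun _ hs ↦ (mem_filter.1 hs).2)

theorem Finset.mem_powersetCard_sdiff_of_insert_mem {U s : Finset α} {a b : α} {k : ℕ}
    (h : insert a s ∈ U.powersetCard k) (ha : a ∉ s) (hb : b ∉ s) :
    s ∈ (U \ {a, b}).powersetCard (k - 1) := by
  rw [mem_powersetCard, card_insert_of_notMem ha] at h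
  refine mem_powersetCard.2 ⟨fun x hx ↦ ?_, by omega⟩
  rw [mem_sdiff, mem_insert, mem_singleton]
  exact ⟨h.1 (mem_insert_of_mem hx), by rintro (rfl | rfl) <;> contradiction⟩

theorem card_filter_mem_notMem_le {F : Finset (Finset α)} {i j : α}
    (hdeg : #{A ∈ F | j ∈ A} ≤ #{A ∈ F | i ∈ A}) :
    #{A ∈ F | j ∈ A ∧ i ∉ A} ≤ #{A ∈ F | i ∈ A ∧ j ∉ A} := by
  have hj := card_filter_add_card_filter_not (s := {A ∈ F | j ∈ A}) (fun A ↦ i ∈ A)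
  have hi := card_filter_add_card_filter_not (s := {A ∈ F | i ∈ A}) (fun A ↦ j ∈ A)
  simp only [filter_filter] at hi hj
  rw [filter_congr fun A _ ↦ and_comm] at hj
  omega

end Families

section MovedSets

variable {n k i j : ℕ} {F : Finset (Finset ℕ)}

theorem not_disjoint_of_mem_memberSubfamily_movedSets (hint : ∀ A ∈ F, ∀ B ∈ F, (A ∩ B).Nonempty)
    (hij : i ≠ j) {s t : Finset ℕ} (hs : s ∈ (F.nonMemberSubfamily j).memberSubfamily i)
    (ht : t ∈ (movedSets i j F).memberSubfamily j) : ¬Disjoint s t := by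
  simp only [mem_memberSubfamily, mem_nonMemberSubfamily] at hs ht
  obtain ⟨⟨hsF, hjs⟩, -⟩ := hs
  obtain ⟨ht, -⟩ := ht
  have hit := (notMem_and_mem_of_mem_movedSets ht).1
  obtain ⟨x, hx⟩ := hint _ hsF _ (mem_movedSets.1 ht).1
  rw [mem_inter] at hx
  refine not_disjoint_iff.2 ⟨x, (mem_insert.1 hx.1).resolve_left ?_,
    (mem_insert.1 hx.2).resolve_left ?_⟩
  · rintro rfl; exact hit hx.2
  · rintro rfl; exact hjs hx.1

theorem disjoint_memberSubfamily_movedSets (hij : i ≠ j) :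
    Disjoint ((F.nonMemberSubfamily j).memberSubfamily i)
      ((movedSets i j F).memberSubfamily j) := by
  refine disjoint_left.2 fun s hs ht ↦ ?_
  simp only [mem_memberSubfamily, mem_nonMemberSubfamily] at hs ht
  obtain ⟨ht, hjs⟩ := ht
  have hjs' : j ∉ s := fun h ↦ hs.1.2 (mem_insert_of_mem h)
  exact (mem_movedSets.1 ht).2 (shiftSet_insert hij hs.2 hjs' ▸ hs.1.1)

theorem card_memberSubfamily_movedSets_le
    (hdeg : #{A ∈ F | j ∈ A} ≤ #{A ∈ F | i ∈ A}) :
    #((movedSets i j F).memberSubfamily j) ≤ #((F.nonMemberSubfamily j).memberSubfamily i) := by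
  rw [card_memberSubfamily, card_memberSubfamily, nonMemberSubfamily, filter_filter,
    filter_congr fun A _ ↦ and_comm]
  refine le_trans (card_le_card fun A hA ↦ ?_) (card_filter_mem_notMem_le hdeg)
  obtain ⟨hA, -⟩ := mem_filter.1 hA
  exact mem_filter.2 ⟨(mem_movedSets.1 hA).1, (notMem_and_mem_of_mem_movedSets hA).symm⟩

theorem card_movedSets_le (hF : F ⊆ (Icc 1 n).powersetCard k)
    (hint : ∀ A ∈ F, ∀ B ∈ F, (A ∩ B).Nonempty) (hi : 1 ≤ i) (hij : i < j) (hj : j ≤ n)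
    (hdeg : #{A ∈ F | j ∈ A} ≤ #{A ∈ F | i ∈ A}) :
    #(movedSets i j F) ≤ (n - 3).choose (k - 2) := by
  have hX : #(Icc 1 n \ {i, j}) = n - 2 := by
    have hij_mem : {i, j} ⊆ Icc 1 n := by
      intro x
      simp only [mem_insert, mem_singleton, mem_Icc]
      omega
    rw [card_sdiff_of_subset hij_mem, card_pair hij.ne, Nat.card_Icc]
    omega
  have hmoved : #((movedSets i j F).memberSubfamily j) = #(movedSets i j F) := by
    rw [card_memberSubfamily, filter_true_of_mem fun A hA ↦
      (notMem_and_mem_of_mem_movedSets hA).2]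
  have h𝒜 : ∀ s ∈ (F.nonMemberSubfamily j).memberSubfamily i,
      s ∈ (Icc 1 n \ {i, j}).powersetCard (k - 1) := by
    intro s hs
    simp only [mem_memberSubfamily, mem_nonMemberSubfamily] at hs
    exact mem_powersetCard_sdiff_of_insert_mem (hF hs.1.1) hs.2
      fun h ↦ hs.1.2 (mem_insert_of_mem h)
  have hℬ : ∀ t ∈ (movedSets i j F).memberSubfamily j,
      t ∈ (Icc 1 n \ {i, j}).powersetCard (k - 1) := by
    intro t ht
    rw [mem_memberSubfamily] at ht
    rw [pair_comm]
    exact mem_powersetCard_sdiff_of_insert_mem (hF (mem_movedSets.1 ht.1).1) ht.2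
      fun h ↦ (notMem_and_mem_of_mem_movedSets ht.1).1 (mem_insert_of_mem h)
  have := card_le_choose_of_crossIntersecting_of_subset hX
    (fun s hs ↦ (mem_powersetCard.1 (h𝒜 s hs)).1) (fun t ht ↦ (mem_powersetCard.1 (hℬ t ht)).1)
    (fun s hs ↦ (mem_powersetCard.1 (h𝒜 s hs)).2) (fun t ht ↦ (mem_powersetCard.1 (hℬ t ht)).2)
    (fun s hs t ht ↦ not_disjoint_of_mem_memberSubfamily_movedSets hint hij.ne hs ht)
    (disjoint_memberSubfamily_movedSets hij.ne) (card_memberSubfamily_movedSets_le hdeg)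
  rwa [hmoved, Nat.sub_sub, Nat.sub_sub] at this

end MovedSets

/-- Lemma 2: if `F ⊆ C([n],k)` is intersecting, `1 ≤ i < j ≤ n`, and the degree
of `i` in `F` is at least that of `j`, then
`γ(F) - γ(S_{i,j}(F)) ≤ C(n-3, k-2)`. -/
theorem diversity_shift_loss (n k i j : ℕ)
    (F : Finset (Finset ℕ))
    (hF : F ⊆ (Finset.Icc 1 n).powersetCard k)
    (hint : ∀ A ∈ F, ∀ B ∈ F, (A ∩ B).Nonempty)
    (hi : 1 ≤ i) (hij : i < j) (hj : j ≤ n)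
    (hdeg : (F.filter (fun A => j ∈ A)).card ≤ (F.filter (fun A => i ∈ A)).card) :
    diversity n F - diversity n (shiftFam i j F) ≤ (n - 3).choose (k - 2) :=
  (diversity_sub_diversity_shiftFam_le n hij.ne).trans (card_movedSets_le hF hint hi hij hj hdeg)
end
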